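/- arXiv:2105.03694 — 13 statements merged into one kernel-verified Lean document; each statement's English description precedes it below -/
import Mathlib

section
/- A proper coloring of a graph G is Dom-compelling (every rainbow committee, i.e., set consisting of one vertex of each color, is a dominating set of G) if and only if it is a dominator coloring (every vertex of G dominates all vertices of at least one color class). -/
open SimpleGraph

/-- A proper coloring of `G` with `k` colors. -/
def ProperColoring {V : Type*} {k : ℕ} (G : SimpleGraph V) (c : V → Fin k) : Prop :=
  ∀ ⦃u v : V⦄, G.Adj u v → c u ≠ c v

/-- `f` selects a rainbow committee of the coloring `c`: one vertex of each color. -/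
def IsRainbow {V : Type*} {k : ℕ} (c : V → Fin k) (f : Fin k → V) : Prop :=
  ∀ i : Fin k, c (f i) = i

/-- The coloring `c` compels property `P`: every rainbow committee has property `P`. -/
def Compels {V : Type*} {k : ℕ} (c : V → Fin k) (P : Set V → Prop) : Prop :=
  ∀ f : Fin k → V, IsRainbow c f → P (Set.range f)

/-- The `P`-compelling chromatic number of `G`: the least number of colors in a proper
coloring, using every color, in which every rainbow committee has property `P`. -/
noncomputable def compellingChromNum {V : Type*} (G : SimpleGraph V) (P : Set V → Prop) : ℕ :=
  sInf {k : ℕ | ∃ c : V → Fin k,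
    ProperColoring G c ∧ Function.Surjective c ∧ Compels c P}

/-!
A rainbow committee meets every color class, so it dominates each vertex that dominates a
whole color class. Conversely, if `v` dominates no color class, then every class contains a
vertex outside the closed neighbourhood of `v`; choosing one in each class gives a rainbow
committee that misses `v` and all its neighbours.
-/

section

variable {V : Type*} {k : ℕ} (G : SimpleGraph V) (c : V → Fin k)

theorem IsRainbow.mem_range_or_adj_of_dominates {f : Fin k → V} (hf : IsRainbow c f) {v : V}
    {i : Fin k} (hv : ∀ u, c u = i → u = v ∨ G.Adj v u) :
    v ∈ Set.range f ∨ ∃ u ∈ Set.range f, G.Adj u v :=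
  (hv (f i) (hf i)).imp (fun h => ⟨i, h⟩) fun h => ⟨f i, ⟨i, rfl⟩, h.symm⟩

theorem exists_isRainbow_avoiding {v : V}
    (hv : ∀ i, ∃ u, c u = i ∧ u ≠ v ∧ ¬G.Adj v u) :
    ∃ f : Fin k → V, IsRainbow c f ∧ v ∉ Set.range f ∧ ∀ u ∈ Set.range f, ¬G.Adj u v := by
  choose f hf hne hnadj using hv
  refine ⟨f, hf, ?_, ?_⟩
  · rintro ⟨i, hi⟩
    exact hne i hi
  · rintro _ ⟨i, rfl⟩ hadj
    exact hnadj i hadj.symm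

theorem forall_isRainbow_mem_range_or_adj_iff (v : V) :
    (∀ f : Fin k → V, IsRainbow c f → v ∈ Set.range f ∨ ∃ u ∈ Set.range f, G.Adj u v) ↔
      ∃ i : Fin k, ∀ u : V, c u = i → u = v ∨ G.Adj v u := by
  refine ⟨fun h => ?_, fun ⟨i, hi⟩ f hf => hf.mem_range_or_adj_of_dominates G c hi⟩
  by_contra! hv
  obtain ⟨f, hf, hvf, hadj⟩ := exists_isRainbow_avoiding G c hv
  rcases h f hf with hmem | ⟨u, hu, huv⟩
  · exact hvf hmem
  · exact hadj u hu huv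

end

theorem dom_compelling_iff_dominator_coloring_general {V : Type*} (G : SimpleGraph V)
    {k : ℕ} (c : V → Fin k) :
    Compels c (fun S => ∀ v : V, v ∈ S ∨ ∃ u ∈ S, G.Adj u v) ↔
      ∀ v : V, ∃ i : Fin k, ∀ u : V, c u = i → u = v ∨ G.Adj v u := by
  refine ⟨fun h v => ?_, fun h f hf v => ?_⟩
  · exact (forall_isRainbow_mem_range_or_adj_iff G c v).1 fun f hf => h f hf v
  · exact (forall_isRainbow_mem_range_or_adj_iff G c v).2 (h v) f hf

/-- A proper coloring (each color used) is Dom-compelling (every rainbow committee is a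
dominating set) iff it is a dominator coloring (every vertex dominates some color class). -/
theorem dom_compelling_iff_dominator_coloring {V : Type*} [Fintype V] (G : SimpleGraph V)
    {k : ℕ} (c : V → Fin k) (hp : ProperColoring G c) (hs : Function.Surjective c) :
    Compels c (fun S => ∀ v : V, v ∈ S ∨ ∃ u ∈ S, G.Adj u v) ↔
      ∀ v : V, ∃ i : Fin k, ∀ u : V, c u = i → u = v ∨ G.Adj v u :=
  dom_compelling_iff_dominator_coloring_general G c
end

section
/- A proper coloring of a graph G is IF-compelling (every rainbow committee induces a subgraph with no isolated vertices) if and only if it is TDom-compelling (every rainbow committee is a total dominating set of G). -/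
open SimpleGraph

theorem IsRainbow.update {V : Type*} {k : ℕ} {c : V → Fin k} {f : Fin k → V}
    (hf : IsRainbow c f) (v : V) : IsRainbow c (Function.update f (c v) v) := by
  intro i
  obtain rfl | hi := eq_or_ne i (c v)
  · rw [Function.update_self]
  · rw [Function.update_of_ne hi, hf i]

theorem if_compelling_iff_tdom_compelling_general {V : Type*} (G : SimpleGraph V)
    {k : ℕ} (c : V → Fin k) :
    Compels c (fun S => ∀ v ∈ S, ∃ u ∈ S, G.Adj u v) ↔
      Compels c (fun S => ∀ v : V, ∃ u ∈ S, G.Adj u v) := by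
  refine ⟨fun h f hf v => ?_, fun h f hf v _ => h f hf v⟩
  -- Put `v` into the committee in place of its colour class; the neighbour of `v` it then
  -- has is not `v` itself, so it was already a member of the original committee.
  obtain ⟨u, ⟨j, rfl⟩, hadj⟩ := h _ (hf.update v) v ⟨c v, Function.update_self ..⟩
  obtain rfl | hj := eq_or_ne j (c v)
  · rw [Function.update_self] at hadj
    exact (G.irrefl hadj).elim
  · exact ⟨f j, ⟨j, rfl⟩, by rwa [Function.update_of_ne hj] at hadj⟩

/-- A proper coloring is IF-compelling (every rainbow committee induces a subgraph with no
isolated vertices) iff it is TDom-compelling (every rainbow committee totally dominates). -/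
theorem if_compelling_iff_tdom_compelling {V : Type*} [Fintype V] (G : SimpleGraph V)
    {k : ℕ} (c : V → Fin k) (hp : ProperColoring G c) (hs : Function.Surjective c) :
    Compels c (fun S => ∀ v ∈ S, ∃ u ∈ S, G.Adj u v) ↔
      Compels c (fun S => ∀ v : V, ∃ u ∈ S, G.Adj u v) :=
  if_compelling_iff_tdom_compelling_general G c
end

section
/- If P is an upwards-closed property of vertex subsets of a graph G (every superset of a set with P also has P) and some subset of V(G) has property P, then the P-compelling chromatic number of G is at most m_P(G) + χ(G). -/
open SimpleGraph

/-!
Take a smallest set `S` with property `P` and an optimal proper coloring, and give every vertex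
of `S` a private new color. A color class consisting of a single vertex forces that vertex into
every rainbow committee, so every rainbow committee contains `S` and has `P` by upward closure,
while at most `|S| + χ(G)` colors are in use.
-/

namespace SimpleGraph

variable {V β : Type*} {G : SimpleGraph V}

def Coloring.isolate (C : G.Coloring β) (S : Set V) [DecidablePred (· ∈ S)] :
    G.Coloring (S ⊕ β) :=
  Coloring.mk (fun v => if h : v ∈ S then .inl ⟨v, h⟩ else .inr (C v)) <| by
    intro u v huv
    by_cases hu : u ∈ S <;> by_cases hv : v ∈ S <;> simp [hu, hv, huv.ne, C.valid huv]

theorem Coloring.isolate_apply (C : G.Coloring β) (S : Set V) [DecidablePred (· ∈ S)] (v : V) :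
    C.isolate S v = if h : v ∈ S then .inl ⟨v, h⟩ else .inr (C v) :=
  rfl

theorem Coloring.isolate_eq_imp_eq (C : G.Coloring β) {S : Set V} [DecidablePred (· ∈ S)]
    {u v : V} (hv : v ∈ S) (h : C.isolate S u = C.isolate S v) : u = v := by
  by_cases hu : u ∈ S <;> simp_all [Coloring.isolate_apply]

end SimpleGraph

theorem subset_range_of_isRainbow {V : Type*} {k : ℕ} {c : V → Fin k} {f : Fin k → V}
    {S : Set V} (hf : IsRainbow c f) (hS : ∀ v ∈ S, ∀ u, c u = c v → u = v) :
    S ⊆ Set.range f :=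
  fun v hv => ⟨c v, hS v hv _ (hf _)⟩

theorem compellingChromNum_le_ncard_range {V α : Type*} [Finite V] {G : SimpleGraph V}
    {P : Set V → Prop} {S : Set V} (hP : ∀ T, S ⊆ T → P T) (C : G.Coloring α)
    (hS : ∀ v ∈ S, ∀ u, C u = C v → u = v) :
    compellingChromNum G P ≤ (Set.range C).ncard := by
  -- `compellingChromNum` counts only colorings using every color, so renumber the used ones.
  let e := Finite.equivFin (Set.range C)
  have he : ∀ {u v}, e (Set.rangeFactorization C u) = e (Set.rangeFactorization C v) →
      C u = C v := fun h => congrArg Subtype.val (e.injective h)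
  refine Nat.sInf_le ⟨e ∘ Set.rangeFactorization C, ?_, ?_, ?_⟩
  · exact fun u v huv h => C.valid huv (he h)
  · exact e.surjective.comp Set.rangeFactorization_surjective
  · exact fun f hf => hP _ <| subset_range_of_isRainbow hf fun v hv u h => hS v hv u (he h)

theorem compellingChromNum_le_ncard_add {V : Type*} [Finite V] {G : SimpleGraph V}
    {P : Set V → Prop} {S : Set V} (hP : ∀ T, S ⊆ T → P T) {n : ℕ} (hG : G.Colorable n) :
    compellingChromNum G P ≤ S.ncard + n := by
  classical
  obtain ⟨C⟩ := hG
  calc compellingChromNum G P ≤ (Set.range (C.isolate S)).ncard :=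
        compellingChromNum_le_ncard_range hP _ fun v hv _ => C.isolate_eq_imp_eq hv
    _ ≤ Nat.card (S ⊕ Fin n) := Set.ncard_le_card _
    _ = S.ncard + n := by rw [Nat.card_sum, Nat.card_coe_set_eq, Nat.card_fin]

/-- If `P` is upwards-closed and some subset has `P`, then the `P`-compelling chromatic
number is at most `m_P G + χ G`. -/
theorem compellingChromNum_le_of_upwardsClosed {V : Type*} [Fintype V] (G : SimpleGraph V)
    (P : Set V → Prop) (hup : ∀ S T : Set V, P S → S ⊆ T → P T) (hex : ∃ S : Set V, P S) :
    (compellingChromNum G P : ℕ∞) ≤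
      ((sInf {n : ℕ | ∃ S : Set V, P S ∧ S.ncard = n} : ℕ) : ℕ∞) + G.chromaticNumber := by
  obtain ⟨S, hPS, hS⟩ : sInf {n : ℕ | ∃ S : Set V, P S ∧ S.ncard = n} ∈
      {n : ℕ | ∃ S : Set V, P S ∧ S.ncard = n} :=
    let ⟨S, hS⟩ := hex; Nat.sInf_mem ⟨_, S, hS, rfl⟩
  obtain ⟨n, hn⟩ : ∃ n : ℕ, (n : ℕ∞) = G.chromaticNumber :=
    ENat.ne_top_iff_exists.mp (chromaticNumber_ne_top_iff_exists.mpr ⟨_, G.colorable_of_fintype⟩)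
  rw [← hS, ← hn]
  exact_mod_cast compellingChromNum_le_ncard_add (hup S · hPS)
    (chromaticNumber_le_iff_colorable.mp hn.ge)
end

section
/- The Edge-compelling chromatic number of the path P_n is 2 for n = 2, 3; it is 3 for n = 4, 5, 6; and it is 4 for all n ≥ 7. -/
open SimpleGraph

/-- Property `Edge`: the set contains at least one edge of `G`. -/
def HasEdge {V : Type*} (G : SimpleGraph V) (S : Set V) : Prop :=
  ∃ u ∈ S, ∃ v ∈ S, G.Adj u v

/-- The Edge-compelling chromatic number. -/
noncomputable def edgeCompellingChromNum {V : Type*} (G : SimpleGraph V) : ℕ :=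
  compellingChromNum G (HasEdge G)

/-!
Two colors fail once `n ≥ 4`: in a proper 2-coloring of the path, vertices `0` and `3` get
different colors and form an independent rainbow committee. Three colors fail once `n ≥ 7`:
if some color is missing from the first seven vertices, a vertex of that color together with
vertex `0` and a suitable one of vertices `2`, `3` is an independent rainbow committee;
otherwise a finite check on the first seven vertices finds one. Four colors always suffice:
give vertices `0` and `1` private colors and alternate the other two colors along the rest,
so that every rainbow committee contains the edge `01`.
-/

instance {n : ℕ} : DecidableRel (pathGraph n).Adj :=
  fun _ _ => decidable_of_iff _ pathGraph_adj.symm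

section
variable {V : Type*} {G : SimpleGraph V} {k : ℕ} {c : V → Fin k}

theorem compellingChromNum_eq_of_forall_lt {P : Set V → Prop} {m : ℕ} (c : V → Fin m)
    (hc : ProperColoring G c) (hsurj : Function.Surjective c) (hP : Compels c P)
    (hmin : ∀ k < m, ∀ c : V → Fin k, ProperColoring G c → Function.Surjective c →
      ¬ Compels c P) :
    compellingChromNum G P = m := by
  refine le_antisymm (Nat.sInf_le ⟨c, hc, hsurj, hP⟩) (le_csInf ⟨m, c, hc, hsurj, hP⟩ ?_)
  rintro k ⟨c', hc', hsurj', hP'⟩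
  by_contra! hk
  exact hmin k hk c' hc' hsurj' hP'

theorem ProperColoring.two_le {u v : V} (hc : ProperColoring G c) (huv : G.Adj u v) : 2 ≤ k := by
  by_contra! hk
  have := Fin.subsingleton_iff_le_one.2 (Nat.le_of_lt_succ hk)
  exact hc huv (Subsingleton.elim _ _)

instance [Fintype V] [DecidableRel G.Adj] : Decidable (ProperColoring G c) :=
  inferInstanceAs (Decidable (∀ u v, G.Adj u v → c u ≠ c v))

theorem compels_hasEdge_iff :
    Compels c (HasEdge G) ↔ ∀ f : Fin k → V, IsRainbow c f → ∃ i j, G.Adj (f i) (f j) := by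
  refine forall₂_congr fun f _ => ⟨?_, ?_⟩
  · rintro ⟨_, ⟨i, rfl⟩, _, ⟨j, rfl⟩, hadj⟩
    exact ⟨i, j, hadj⟩
  · rintro ⟨i, j, hadj⟩
    exact ⟨f i, ⟨i, rfl⟩, f j, ⟨j, rfl⟩, hadj⟩

instance [Fintype V] [DecidableEq V] [DecidableRel G.Adj] : Decidable (Compels c (HasEdge G)) :=
  haveI : DecidablePred (IsRainbow c) := fun f =>
    inferInstanceAs (Decidable (∀ i, c (f i) = i))
  decidable_of_iff _ compels_hasEdge_iff.symm

theorem not_compels_hasEdge_of_isIndepSet {s : Set V} (hs : G.IsIndepSet s)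
    (hsurj : Set.SurjOn c s Set.univ) : ¬ Compels c (HasEdge G) := by
  intro hcomp
  choose f hfs hfc using fun i => hsurj (Set.mem_univ i)
  obtain ⟨_, ⟨i, rfl⟩, _, ⟨j, rfl⟩, hadj⟩ := hcomp f hfc
  exact hs (hfs i) (hfs j) hadj.ne hadj

theorem not_compels_hasEdge_of_pair {c : V → Fin 2} {u v : V} (huv : ¬ G.Adj u v)
    (hc : c u ≠ c v) : ¬ Compels c (HasEdge G) := by
  refine not_compels_hasEdge_of_isIndepSet (s := {u, v}) ?_ fun i _ => ?_
  · simp [IsIndepSet, Set.pairwise_pair, huv, mt Adj.symm huv]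
  · have : ∀ a b i : Fin 2, a ≠ b → i = a ∨ i = b := by decide
    rcases this _ _ i hc with rfl | rfl <;> simp

theorem not_compels_hasEdge_of_triple {c : V → Fin 3} {u v w : V} (huv : ¬ G.Adj u v)
    (huw : ¬ G.Adj u w) (hvw : ¬ G.Adj v w) (hc : [c u, c v, c w].Nodup) :
    ¬ Compels c (HasEdge G) := by
  refine not_compels_hasEdge_of_isIndepSet (s := {u, v, w}) ?_ fun i _ => ?_
  · simp [IsIndepSet, Set.pairwise_insert, huv, huw, hvw, mt Adj.symm huv, mt Adj.symm huw,
      mt Adj.symm hvw]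
  · have : ∀ a b d i : Fin 3, [a, b, d].Nodup → i = a ∨ i = b ∨ i = d := by decide
    rcases this _ _ _ i hc with rfl | rfl | rfl <;> simp

theorem compels_hasEdge_of_adj_of_unique {i j : Fin k} {u v : V} (hu : ∀ x, c x = i → x = u)
    (hv : ∀ x, c x = j → x = v) (huv : G.Adj u v) : Compels c (HasEdge G) :=
  fun _ hf => ⟨u, ⟨i, hu _ (hf i)⟩, v, ⟨j, hv _ (hf j)⟩, huv⟩

end

section Path
variable {n k : ℕ}

theorem pathGraph_adj_castLE_succ {m : ℕ} (h : m + 1 ≤ n) (i : Fin m) :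
    (pathGraph n).Adj (Fin.castLE h i.castSucc) (Fin.castLE h i.succ) :=
  pathGraph_adj.2 (Or.inl (by simp))

theorem pathGraph_not_adj_of_add_two_le {u v : Fin n} (h : u.val + 2 ≤ v) :
    ¬ (pathGraph n).Adj u v := by
  rw [pathGraph_adj]
  omega

theorem two_le_of_properColoring_pathGraph (hn : 2 ≤ n) {c : Fin n → Fin k}
    (hc : ProperColoring (pathGraph n) c) : 2 ≤ k :=
  hc.two_le (pathGraph_adj_castLE_succ hn (0 : Fin 1))

theorem not_compels_hasEdge_pathGraph_of_two (hn : 4 ≤ n) {c : Fin n → Fin 2}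
    (hc : ProperColoring (pathGraph n) c) : ¬ Compels c (HasEdge (pathGraph n)) := by
  have eq_of_ne_of_ne : ∀ {a b d : Fin 2}, a ≠ b → b ≠ d → a = d := by decide
  have hadj := fun i => hc (pathGraph_adj_castLE_succ hn (i : Fin 3))
  have h02 : c (Fin.castLE hn 0) = c (Fin.castLE hn 2) := eq_of_ne_of_ne (hadj 0) (hadj 1)
  exact not_compels_hasEdge_of_pair (pathGraph_not_adj_of_add_two_le (by simp))
    (h02 ▸ hadj 2)

theorem not_compels_hasEdge_pathGraph_of_triple {c : Fin n → Fin 3} {u v w : Fin n}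
    (huv : u.val + 2 ≤ v) (hvw : v.val + 2 ≤ w) (hc : [c u, c v, c w].Nodup) :
    ¬ Compels c (HasEdge (pathGraph n)) :=
  not_compels_hasEdge_of_triple (pathGraph_not_adj_of_add_two_le huv)
    (pathGraph_not_adj_of_add_two_le (by omega)) (pathGraph_not_adj_of_add_two_le hvw) hc

-- The ten lists are the colors of all the independent triples of `P_7`.
set_option synthInstance.maxSize 500 in
theorem exists_rainbow_independent_triple_of_seven : ∀ a₀ a₁ a₂ a₃ a₄ a₅ a₆ : Fin 3,
    a₀ ≠ a₁ → a₁ ≠ a₂ → a₂ ≠ a₃ → a₃ ≠ a₄ → a₄ ≠ a₅ → a₅ ≠ a₆ →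
    (∀ z : Fin 3, z ∈ [a₀, a₁, a₂, a₃, a₄, a₅, a₆]) →
    [a₀, a₂, a₄].Nodup ∨ [a₀, a₂, a₅].Nodup ∨ [a₀, a₂, a₆].Nodup ∨ [a₀, a₃, a₅].Nodup ∨
    [a₀, a₃, a₆].Nodup ∨ [a₀, a₄, a₆].Nodup ∨ [a₁, a₃, a₅].Nodup ∨ [a₁, a₃, a₆].Nodup ∨
    [a₁, a₄, a₆].Nodup ∨ [a₂, a₄, a₆].Nodup := by
  decide

theorem not_compels_hasEdge_pathGraph_of_forall_mem_seven (hn : 7 ≤ n) {c : Fin n → Fin 3}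
    (hc : ProperColoring (pathGraph n) c) (hcover : ∀ z, ∃ i : Fin 7, c (Fin.castLE hn i) = z) :
    ¬ Compels c (HasEdge (pathGraph n)) := by
  have hadj := fun i => hc (pathGraph_adj_castLE_succ hn (i : Fin 6))
  have hmem : ∀ z, z ∈ (List.ofFn fun i : Fin 7 => c (Fin.castLE hn i)) := by
    intro z
    obtain ⟨i, rfl⟩ := hcover z
    exact List.mem_ofFn.2 ⟨i, rfl⟩
  simp only [List.ofFn_succ, List.ofFn_zero] at hmem
  rcases exists_rainbow_independent_triple_of_seven _ _ _ _ _ _ _ (hadj 0) (hadj 1) (hadj 2)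
    (hadj 3) (hadj 4) (hadj 5) hmem with h | h | h | h | h | h | h | h | h | h <;>
  exact not_compels_hasEdge_pathGraph_of_triple (by simp) (by simp) h

theorem not_compels_hasEdge_pathGraph_of_fresh_color {c : Fin n → Fin 3}
    (hc : ProperColoring (pathGraph n) c) (u : Fin n) (hu : 5 ≤ u.val)
    (hfresh : ∀ v : Fin n, v.val < 4 → c v ≠ c u) : ¬ Compels c (HasEdge (pathGraph n)) := by
  have hn : 4 ≤ n := by omega
  have hadj := fun i => hc (pathGraph_adj_castLE_succ hn (i : Fin 3))
  have hfresh' := fun i : Fin 4 => hfresh (Fin.castLE hn i) (by simp)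
  by_cases h02 : c (Fin.castLE hn 0) = c (Fin.castLE hn 2)
  · refine not_compels_hasEdge_pathGraph_of_triple (u := Fin.castLE hn 0) (v := Fin.castLE hn 3)
      (w := u) (by simp) (by simp; omega) ?_
    rw [h02]
    simpa [hfresh' 2, hfresh' 3] using hadj 2
  · refine not_compels_hasEdge_pathGraph_of_triple (u := Fin.castLE hn 0) (v := Fin.castLE hn 2)
      (w := u) (by simp) (by simp; omega) ?_
    simp [h02, hfresh' 0, hfresh' 2]

theorem not_compels_hasEdge_pathGraph_of_three (hn : 7 ≤ n) {c : Fin n → Fin 3}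
    (hc : ProperColoring (pathGraph n) c) (hsurj : Function.Surjective c) :
    ¬ Compels c (HasEdge (pathGraph n)) := by
  by_cases hcover : ∀ z, ∃ i : Fin 7, c (Fin.castLE hn i) = z
  · exact not_compels_hasEdge_pathGraph_of_forall_mem_seven hn hc hcover
  push Not at hcover
  obtain ⟨_, hz⟩ := hcover
  obtain ⟨u, rfl⟩ := hsurj ‹_›
  have hu : 7 ≤ u.val := by
    by_contra! hu
    exact hz ⟨u, hu⟩ rfl
  exact not_compels_hasEdge_pathGraph_of_fresh_color hc u (by omega)
    fun v hv => hz ⟨v, by omega⟩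

theorem not_compels_hasEdge_pathGraph_of_lt_three (hn : 4 ≤ n) (hk : k < 3) {c : Fin n → Fin k}
    (hc : ProperColoring (pathGraph n) c) : ¬ Compels c (HasEdge (pathGraph n)) := by
  obtain rfl : k = 2 := by
    have := two_le_of_properColoring_pathGraph (by omega) hc
    omega
  exact not_compels_hasEdge_pathGraph_of_two hn hc

theorem not_compels_hasEdge_pathGraph_of_lt_four (hn : 7 ≤ n) (hk : k < 4) {c : Fin n → Fin k}
    (hc : ProperColoring (pathGraph n) c) (hsurj : Function.Surjective c) :
    ¬ Compels c (HasEdge (pathGraph n)) := by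
  obtain hk | rfl : k < 3 ∨ k = 3 := by omega
  · exact not_compels_hasEdge_pathGraph_of_lt_three (by omega) hk hc
  · exact not_compels_hasEdge_pathGraph_of_three hn hc hsurj

def pathFourColoring (n : ℕ) : Fin n → Fin 4 := fun v =>
  if v.val = 0 then 2 else if v.val = 1 then 3 else ⟨v.val % 2, by omega⟩

theorem pathFourColoring_val (v : Fin n) : (pathFourColoring n v).val =
    if v.val = 0 then 2 else if v.val = 1 then 3 else v.val % 2 := by
  unfold pathFourColoring
  split_ifs <;> rfl

theorem properColoring_pathFourColoring : ProperColoring (pathGraph n) (pathFourColoring n) := by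
  intro u v huv h
  have := congrArg Fin.val h
  rw [pathGraph_adj] at huv
  rw [pathFourColoring_val, pathFourColoring_val] at this
  split_ifs at this <;> omega

theorem surjective_pathFourColoring (hn : 4 ≤ n) : Function.Surjective (pathFourColoring n) := by
  intro i
  refine ⟨⟨(i.val + 2) % 4, by omega⟩, Fin.ext ?_⟩
  rw [pathFourColoring_val]
  dsimp only
  split_ifs <;> omega

theorem compels_hasEdge_pathFourColoring (hn : 2 ≤ n) :
    Compels (pathFourColoring n) (HasEdge (pathGraph n)) := by
  refine compels_hasEdge_of_adj_of_unique (i := 2) (j := 3) (fun v hv => ?_) (fun v hv => ?_)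
    (pathGraph_adj_castLE_succ hn (0 : Fin 1))
  all_goals
    have := congrArg Fin.val hv
    rw [pathFourColoring_val] at this
    ext
    simp only [Fin.val_castLE, Fin.val_castSucc, Fin.val_succ, Fin.val_zero]
    split_ifs at this <;> omega

end Path

set_option maxRecDepth 10000 in
/-- The Edge-compelling chromatic number of the path `P_n` is 2 for `n = 2, 3`,
3 for `n = 4, 5, 6`, and 4 for `n ≥ 7`. -/
theorem edgeCompellingChromNum_pathGraph :
    edgeCompellingChromNum (pathGraph 2) = 2 ∧
    edgeCompellingChromNum (pathGraph 3) = 2 ∧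
    edgeCompellingChromNum (pathGraph 4) = 3 ∧
    edgeCompellingChromNum (pathGraph 5) = 3 ∧
    edgeCompellingChromNum (pathGraph 6) = 3 ∧
    ∀ n : ℕ, 7 ≤ n → edgeCompellingChromNum (pathGraph n) = 4 := by
  refine ⟨?_, ?_, ?_, ?_, ?_, fun n hn => ?_⟩
  · exact compellingChromNum_eq_of_forall_lt ![0, 1] (by decide) (by decide) (by decide)
      fun _ hk _ hc _ _ => absurd (two_le_of_properColoring_pathGraph le_rfl hc) (by omega)
  · exact compellingChromNum_eq_of_forall_lt ![0, 1, 0] (by decide) (by decide) (by decide)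
      fun _ hk _ hc _ _ => absurd (two_le_of_properColoring_pathGraph (by norm_num) hc) (by omega)
  · exact compellingChromNum_eq_of_forall_lt ![0, 1, 2, 1] (by decide) (by decide) (by decide)
      fun _ hk _ hc _ => not_compels_hasEdge_pathGraph_of_lt_three le_rfl hk hc
  · exact compellingChromNum_eq_of_forall_lt ![0, 1, 2, 1, 0] (by decide) (by decide)
      (by decide) fun _ hk _ hc _ => not_compels_hasEdge_pathGraph_of_lt_three (by norm_num) hk hc
  · exact compellingChromNum_eq_of_forall_lt ![0, 1, 0, 1, 2, 1] (by decide) (by decide)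
      (by decide) fun _ hk _ hc _ => not_compels_hasEdge_pathGraph_of_lt_three (by norm_num) hk hc
  · exact compellingChromNum_eq_of_forall_lt (pathFourColoring n) properColoring_pathFourColoring
      (surjective_pathFourColoring (by omega)) (compels_hasEdge_pathFourColoring (by omega))
      fun k hk c hc hsurj => not_compels_hasEdge_pathGraph_of_lt_four hn hk hc hsurj
end

section
/- A tree T with at least 2 vertices has Edge-compelling chromatic number 3 if and only if T has radius 2 or T is a double broom (and T is not a star or K_2). -/
open SimpleGraph

/-- The radius of a graph: the least `r` such that some vertex is within distance `r`
of every vertex. -/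
noncomputable def graphRadius {V : Type*} (G : SimpleGraph V) : ℕ :=
  sInf {r : ℕ | ∃ u : V, ∀ v : V, G.dist u v ≤ r}

/-- `G` is a double broom: two stars, each with at least two vertices, with one leaf of
the first joined by an edge to one leaf of the second. Here `c, c'` are the star centers
and `x, y` the joined leaves. -/
def IsDoubleBroom {V : Type*} (G : SimpleGraph V) : Prop :=
  ∃ c c' x y : V, c ≠ c' ∧ c ≠ y ∧ c' ≠ x ∧
    G.Adj c x ∧ G.Adj c' y ∧ G.Adj x y ∧
    ¬G.Adj c c' ∧ ¬G.Adj c y ∧ ¬G.Adj c' x ∧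
    (∀ v : V, v ≠ c → v ≠ c' →
      ((G.Adj c v ∧ ¬G.Adj c' v) ∨ (G.Adj c' v ∧ ¬G.Adj c v))) ∧
    (∀ u v : V, G.Adj u v →
      u = c ∨ v = c ∨ u = c' ∨ v = c' ∨ (u = x ∧ v = y) ∨ (u = y ∧ v = x))

/-!
Two colours compel an edge exactly when any two vertices of different colours are adjacent;
since a tree has no 4-cycle, one colour class is then a single vertex, the centre of a star.
With three colours, colouring by the distance from a vertex of eccentricity 2 compels an edge,
and so does colouring a double broom with centres `p, q` and joined leaves `x, y` by
`{p, y}`, `{q, x}` and the rest (if there is no rest, it is a path of radius 2).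
Conversely, let `ℓ` be a leaf with neighbour `s` in an edge-compelling 3-colouring. The rainbow
triples through `ℓ` join every other vertex of the class of `s` to the whole third class, so by
the absence of 4-cycles one of the two sides has at most one vertex. Repeating this argument
around `s` yields either a vertex cover inside a closed neighbourhood (radius at most 2) or two
vertices dominating the tree; two dominating vertices at distance at least 3 are the centres of
a double broom.
-/

theorem Nat.sInf_eq_iff_of_ne_zero {s : Set ℕ} {n : ℕ} (hn : n ≠ 0) :
    sInf s = n ↔ n ∈ s ∧ ∀ m < n, m ∉ s := by
  refine ⟨fun h => ?_, fun ⟨hns, hlt⟩ => ?_⟩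
  · have hne : s.Nonempty := Nat.nonempty_of_pos_sInf (by omega)
    exact ⟨h ▸ Nat.sInf_mem hne, fun m hm => Nat.notMem_of_lt_sInf (h ▸ hm)⟩
  · exact le_antisymm (Nat.sInf_le hns) (not_lt.1 fun h => hlt _ h (Nat.sInf_mem ⟨n, hns⟩))

theorem graphRadius_le_iff {V : Type*} [Finite V] [Nonempty V] (G : SimpleGraph V) {r : ℕ} :
    graphRadius G ≤ r ↔ ∃ u, ∀ v, G.dist u v ≤ r := by
  refine ⟨fun h => ?_, fun h => Nat.sInf_le h⟩
  obtain ⟨v₀, hv₀⟩ := Finite.exists_max (G.dist (Classical.arbitrary V))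
  obtain ⟨u, hu⟩ := Nat.sInf_mem (s := {r | ∃ u, ∀ v, G.dist u v ≤ r}) ⟨_, _, hv₀⟩
  exact ⟨u, fun v => (hu v).trans h⟩

theorem monotone_hasEdge {V : Type*} (G : SimpleGraph V) : Monotone (HasEdge G) :=
  fun _ _ hST ⟨u, hu, v, hv, huv⟩ => ⟨u, hST hu, v, hST hv, huv⟩

theorem Compels.of_surjOn {V : Type*} {k : ℕ} {c : V → Fin k} {P : Set V → Prop}
    (hc : Compels c P) (hP : Monotone P) {S : Set V} (hS : Set.SurjOn c S Set.univ) : P S := by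
  choose f hfS hfc using fun i => hS (Set.mem_univ i)
  exact hP (Set.range_subset_iff.2 hfS) (hc f hfc)

theorem Compels.adj_of_ne {V : Type*} {G : SimpleGraph V} {c : V → Fin 2}
    (hc : Compels c (HasEdge G)) {a b : V} (hab : c a ≠ c b) : G.Adj a b := by
  obtain ⟨u, hu, v, hv, huv⟩ := hc.of_surjOn (monotone_hasEdge G) (S := {a, b}) fun i _ => by
    obtain rfl | rfl : i = c a ∨ i = c b := by omega
    exacts [⟨a, by simp⟩, ⟨b, by simp⟩]
  simp only [Set.mem_insert_iff, Set.mem_singleton_iff] at hu hv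
  rcases hu with rfl | rfl <;> rcases hv with rfl | rfl <;> simp_all [G.adj_comm]

theorem Compels.adj_or_adj_or_adj {V : Type*} {G : SimpleGraph V} {c : V → Fin 3}
    (hc : Compels c (HasEdge G)) {a b x : V} (hab : c a ≠ c b) (hax : c a ≠ c x)
    (hbx : c b ≠ c x) : G.Adj a b ∨ G.Adj a x ∨ G.Adj b x := by
  obtain ⟨u, hu, v, hv, huv⟩ := hc.of_surjOn (monotone_hasEdge G) (S := {a, b, x}) fun i _ => by
    obtain rfl | rfl | rfl : i = c a ∨ i = c b ∨ i = c x := by omega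
    exacts [⟨a, by simp⟩, ⟨b, by simp⟩, ⟨x, by simp⟩]
  simp only [Set.mem_insert_iff, Set.mem_singleton_iff] at hu hv
  rcases hu with rfl | rfl | rfl <;> rcases hv with rfl | rfl | rfl <;> simp_all [G.adj_comm]

theorem IsDoubleBroom.not_exists_forall_dist_le_one {V : Type*} {T : SimpleGraph V}
    (h : IsDoubleBroom T) (hT : T.Connected) : ¬∃ u, ∀ v, T.dist u v ≤ 1 := by
  rintro ⟨u, hu⟩
  have hadj : ∀ v, v ≠ u → T.Adj u v := fun v hv =>
    dist_eq_one_iff_adj.1 (le_antisymm (hu v) (hT.pos_dist_of_ne (Ne.symm hv)))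
  obtain ⟨p, q, -, -, hpq, -, -, -, -, -, hnpq, -, -, hone, -⟩ := h
  by_cases hup : u = p
  · exact hnpq (hup ▸ hadj q (hup ▸ hpq.symm))
  by_cases huq : u = q
  · exact hnpq (huq ▸ hadj p (huq ▸ hpq)).symm
  rcases hone u hup huq with ⟨-, h⟩ | ⟨-, h⟩
  · exact h (hadj q (Ne.symm huq)).symm
  · exact h (hadj p (Ne.symm hup)).symm

namespace SimpleGraph

variable {V : Type*} {G T : SimpleGraph V}

theorem IsAcyclic.support_eq_of_isPath (hG : G.IsAcyclic) {u v : V} {p q : G.Walk u v}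
    (hp : p.IsPath) (hq : q.IsPath) : p.support = q.support :=
  congrArg (·.1.support) ((hG.subsingleton_path u v).elim ⟨p, hp⟩ ⟨q, hq⟩)

theorem IsAcyclic.not_adj_of_adj_of_adj (hG : G.IsAcyclic) {a b c : V} (hab : G.Adj a b)
    (hbc : G.Adj b c) : ¬G.Adj a c := by
  classical
  exact fun hac => hG.cliqueFree le_rfl {a, b, c} (is3Clique_triple_iff.2 ⟨hab, hac, hbc⟩)

theorem IsAcyclic.eq_of_adj_of_adj (hG : G.IsAcyclic) {a b m m' : V} (hab : a ≠ b)
    (ham : G.Adj a m) (hmb : G.Adj m b) (ham' : G.Adj a m') (hm'b : G.Adj m' b) : m = m' := by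
  have h := hG.support_eq_of_isPath (p := .cons ham (.cons hmb .nil))
    (q := .cons ham' (.cons hm'b .nil)) (by simp [ham.ne, hmb.ne, hab])
    (by simp [ham'.ne, hm'b.ne, hab])
  simpa using h

theorem IsAcyclic.eq_and_eq_of_adj_of_adj_of_adj (hG : G.IsAcyclic) {p q u v x y : V}
    (hpq : p ≠ q) (hnadj : ¬G.Adj p q) (hpu : G.Adj p u) (huv : G.Adj u v) (hvq : G.Adj v q)
    (hpx : G.Adj p x) (hxy : G.Adj x y) (hyq : G.Adj y q) : u = x ∧ v = y := by
  have h := hG.support_eq_of_isPath (p := .cons hpu (.cons huv (.cons hvq .nil)))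
    (q := .cons hpx (.cons hxy (.cons hyq .nil)))
    (by simp [hpu.ne, huv.ne, hvq.ne, hpq]; grind [G.symm])
    (by simp [hpx.ne, hxy.ne, hyq.ne, hpq]; grind)
  simpa using h

theorem IsAcyclic.subsingleton_or_subsingleton_of_forall_adj (hG : G.IsAcyclic) {X Y : Set V}
    (h : ∀ x ∈ X, ∀ y ∈ Y, G.Adj x y) : X.Subsingleton ∨ Y.Subsingleton := by
  by_contra! hXY
  obtain ⟨x, hx, x', hx', hxx'⟩ := hXY.1
  obtain ⟨y, hy, y', hy', hyy'⟩ := hXY.2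
  exact hyy' <| hG.eq_of_adj_of_adj hxx' (h x hx y hy) (h x' hx' y hy).symm (h x hx y' hy')
    (h x' hx' y' hy').symm

theorem dist_le_one_of_mem_insert_neighborSet {u v : V} (h : v ∈ insert u (G.neighborSet u)) :
    G.dist u v ≤ 1 := by
  rcases h with rfl | h
  · simp
  · exact (dist_eq_one_iff_adj.2 h).le

theorem Reachable.exists_dist_eq_of_le {u w : V} (h : G.Reachable u w) {i : ℕ}
    (hi : i ≤ G.dist u w) : ∃ v, G.dist u v = i := by
  obtain ⟨P, hP⟩ := h.exists_walk_length_eq_dist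
  refine ⟨P.getVert i, ?_⟩
  rw [← length_eq_dist_of_subwalk hP (P.isSubwalk_take i), Walk.take_length]
  omega

theorem Connected.forall_dist_le_two_of_isVertexCover [Nontrivial V] (hG : G.Connected)
    {W : Set V} {u : V} (hW : G.IsVertexCover W) (hWu : W ⊆ insert u (G.neighborSet u)) :
    ∀ v, G.dist u v ≤ 2 := by
  intro v
  obtain ⟨w, hvw⟩ := hG.preconnected.exists_adj_of_nontrivial v
  rcases hW hvw with hv | hw
  · exact (dist_le_one_of_mem_insert_neighborSet (hWu hv)).trans (by norm_num)
  · calc G.dist u v ≤ G.dist u w + G.dist w v := hG.dist_triangle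
      _ ≤ 1 + 1 := add_le_add (dist_le_one_of_mem_insert_neighborSet (hWu hw))
          (dist_le_one_of_mem_insert_neighborSet (Or.inr hvw.symm))

theorem Connected.forall_dist_le_two_of_dominating (hG : G.Connected) {m p q : V}
    (hp : G.dist m p ≤ 1) (hq : G.dist m q ≤ 1)
    (hdom : ∀ v, v ∈ insert p (G.neighborSet p) ∨ v ∈ insert q (G.neighborSet q)) :
    ∀ v, G.dist m v ≤ 2 := by
  intro v
  rcases hdom v with h | h
  · exact hG.dist_triangle.trans (add_le_add hp (dist_le_one_of_mem_insert_neighborSet h))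
  · exact hG.dist_triangle.trans (add_le_add hq (dist_le_one_of_mem_insert_neighborSet h))

theorem IsTree.exists_leaf [Finite V] [Nontrivial V] (hT : T.IsTree) :
    ∃ ℓ s, T.Adj ℓ s ∧ ∀ w, T.Adj ℓ w → w = s := by
  classical
  have := Fintype.ofFinite V
  obtain ⟨ℓ, hℓ⟩ := hT.exists_vert_degree_one_of_nontrivial
  obtain ⟨s, hs, huniq⟩ := degree_eq_one_iff_existsUnique_adj.1 hℓ
  exact ⟨ℓ, s, hs, huniq⟩

def EdgeCompellingColorable (G : SimpleGraph V) (k : ℕ) : Prop :=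
  ∃ c : V → Fin k, ProperColoring G c ∧ Function.Surjective c ∧ Compels c (HasEdge G)

theorem edgeCompellingChromNum_eq_sInf :
    edgeCompellingChromNum G = sInf {k | G.EdgeCompellingColorable k} := rfl

theorem EdgeCompellingColorable.two_le {k : ℕ} (h : G.EdgeCompellingColorable k) {u v : V}
    (huv : G.Adj u v) : 2 ≤ k := by
  obtain ⟨c, hc, -, -⟩ := h
  by_contra! hk
  exact hc huv (Fin.ext (by omega))

theorem IsTree.edgeCompellingColorable_of_forall_dist_le (hT : T.IsTree) {u w : V} {r : ℕ}
    (hr : 1 ≤ r) (hle : ∀ v, T.dist u v ≤ r) (hw : T.dist u w = r) :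
    T.EdgeCompellingColorable (r + 1) := by
  refine ⟨fun v => ⟨T.dist u v, Nat.lt_succ_of_le (hle v)⟩, fun a b hab h => ?_, fun i => ?_,
    fun f hf => ?_⟩
  · exact hT.dist_ne_of_adj u hab (Fin.mk.inj_iff.1 h)
  · obtain ⟨v, hv⟩ := (hT.connected u w).exists_dist_eq_of_le (i := i) (by omega)
    exact ⟨v, Fin.ext hv⟩
  · have h0 : T.dist u (f ⟨0, by omega⟩) = 0 := congrArg Fin.val (hf _)
    have h1 : T.dist u (f ⟨1, by omega⟩) = 1 := congrArg Fin.val (hf _)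
    rw [hT.connected.dist_eq_zero_iff] at h0
    exact ⟨u, ⟨_, h0.symm⟩, _, ⟨_, rfl⟩, dist_eq_one_iff_adj.1 h1⟩

theorem IsTree.edgeCompellingColorable_three_of_isDoubleBroom (hT : T.IsTree)
    (h : IsDoubleBroom T) : T.EdgeCompellingColorable 3 := by
  obtain ⟨p, q, x, y, hpq, hpy, hqx, hpx, hqy, hxy, hnpq, hnpy, hnqx, hone, hcls⟩ := h
  by_cases hz : ∃ z, z ≠ p ∧ z ≠ q ∧ z ≠ x ∧ z ≠ y
  · classical
    obtain ⟨z, hz⟩ := hz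
    set c : V → Fin 3 := fun v => if v = p ∨ v = y then 0 else if v = q ∨ v = x then 1 else 2
      with hc
    have hclass : ∀ v, (c v = 0 → v = p ∨ v = y) ∧ (c v = 1 → v = q ∨ v = x) ∧
        (c v = 2 → v ≠ p ∧ v ≠ q) := fun v => by
      simp only [hc]
      split_ifs with h₁ h₂ <;> simp only [Fin.reduceEq, false_imp_iff, true_imp_iff] <;> tauto
    refine ⟨c, fun a b hab => ?_, fun i => ?_, fun f hf => ?_⟩
    · have := hab.ne
      rcases hcls a b hab with rfl | rfl | rfl | rfl | ⟨rfl, rfl⟩ | ⟨rfl, rfl⟩ <;>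
        grind [T.adj_comm]
    · obtain rfl | rfl | rfl : i = 0 ∨ i = 1 ∨ i = 2 := by omega
      exacts [⟨p, by simp [hc]⟩, ⟨q, by simp [hc, hpq.symm, hqy.ne]⟩, ⟨z, by simp [hc, hz]⟩]
    · have h0 := (hclass _).1 (hf 0)
      have h1 := (hclass _).2.1 (hf 1)
      have h2 := (hclass _).2.2 (hf 2)
      rcases h0 with h0 | h0 <;> rcases h1 with h1 | h1
      · rcases hone (f 2) h2.1 h2.2 with h | h
        · exact ⟨f 0, ⟨0, rfl⟩, f 2, ⟨2, rfl⟩, h0 ▸ h.1⟩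
        · exact ⟨f 1, ⟨1, rfl⟩, f 2, ⟨2, rfl⟩, h1 ▸ h.1⟩
      · exact ⟨f 0, ⟨0, rfl⟩, f 1, ⟨1, rfl⟩, h0 ▸ h1 ▸ hpx⟩
      · exact ⟨f 1, ⟨1, rfl⟩, f 0, ⟨0, rfl⟩, h0 ▸ h1 ▸ hqy⟩
      · exact ⟨f 1, ⟨1, rfl⟩, f 0, ⟨0, rfl⟩, h0 ▸ h1 ▸ hxy⟩
  · push Not at hz
    have hxq : T.dist x q = 2 := le_antisymm
      (by simpa using dist_le (Walk.cons hxy (Walk.cons hqy.symm Walk.nil)))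
      (hT.connected.one_lt_dist_of_ne_of_not_adj hqx.symm fun h => hnqx h.symm)
    refine hT.edgeCompellingColorable_of_forall_dist_le one_le_two (fun v => ?_) hxq
    by_cases hvp : v = p
    · exact hvp ▸ (dist_eq_one_iff_adj.2 hpx.symm).le.trans one_le_two
    by_cases hvq : v = q
    · exact hvq ▸ hxq.le
    by_cases hvx : v = x
    · simp [hvx]
    · exact hz v hvp hvq hvx ▸ (dist_eq_one_iff_adj.2 hxy).le.trans one_le_two

theorem IsTree.edgeCompellingColorable_two_iff [Nontrivial V] (hT : T.IsTree) :
    T.EdgeCompellingColorable 2 ↔ ∃ u, ∀ v, T.dist u v ≤ 1 := by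
  constructor
  · rintro ⟨c, -, hsurj, hcomp⟩
    obtain ⟨i, hi⟩ : ∃ i, {v | c v = i}.Subsingleton :=
      (hT.isAcyclic.subsingleton_or_subsingleton_of_forall_adj (X := {v | c v = 0})
        (Y := {v | c v = 1}) fun a ha b hb => hcomp.adj_of_ne (by rw [ha, hb]; decide)).elim
        (⟨0, ·⟩) (⟨1, ·⟩)
    obtain ⟨u, rfl⟩ := hsurj i
    refine ⟨u, fun v => ?_⟩
    by_cases hv : c v = c u
    · simp [hi hv rfl]
    · exact (dist_eq_one_iff_adj.2 (hcomp.adj_of_ne (Ne.symm hv))).le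
  · rintro ⟨u, hu⟩
    obtain ⟨w, huw⟩ := hT.connected.preconnected.exists_adj_of_nontrivial u
    exact hT.edgeCompellingColorable_of_forall_dist_le le_rfl hu (dist_eq_one_iff_adj.2 huw)

theorem IsTree.isDoubleBroom_of_dominating (hT : T.IsTree) {p q : V} (hpq : p ≠ q)
    (hnadj : ¬T.Adj p q) (hcn : ∀ m, T.Adj p m → ¬T.Adj m q)
    (hdom : ∀ v, v ∈ insert p (T.neighborSet p) ∨ v ∈ insert q (T.neighborSet q)) :
    IsDoubleBroom T := by
  have hdom' : ∀ v, v ≠ p → v ≠ q → T.Adj p v ∨ T.Adj q v := fun v hvp hvq => by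
    simpa [hvp, hvq] using hdom v
  obtain ⟨x, y, hpx, hxy, hyq⟩ : ∃ x y, T.Adj p x ∧ T.Adj x y ∧ T.Adj y q := by
    obtain ⟨P, hP, -⟩ := (hT.connected p q).exists_path_of_dist
    cases P with
    | nil => exact absurd rfl hpq
    | cons hpx P =>
      cases P with
      | nil => exact absurd hpx hnadj
      | @cons _ y _ hxy P =>
        have hyp : y ≠ p := by
          rintro rfl
          exact (Walk.cons_isPath_iff _ _).1 hP |>.2 (by simp)
        have hyq : y ≠ q := by
          rintro rfl
          exact hcn _ hpx hxy
        refine ⟨_, y, hpx, hxy, ?_⟩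
        rcases hdom' y hyp hyq with h | h
        · exact absurd h (hT.isAcyclic.not_adj_of_adj_of_adj hpx hxy)
        · exact h.symm
  have hpy : p ≠ y := by rintro rfl; exact hnadj hyq
  have hqx : q ≠ x := by rintro rfl; exact hnadj hpx
  refine ⟨p, q, x, y, hpq, hpy, hqx, hpx, hyq.symm, hxy, hnadj, fun h => hcn y h hyq,
    fun h => hcn x hpx h.symm, fun v hvp hvq => ?_, fun u v huv => ?_⟩
  · rcases hdom' v hvp hvq with h | h
    · exact .inl ⟨h, fun h' => hcn v h h'.symm⟩
    · exact .inr ⟨h, fun h' => hcn v h' h.symm⟩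
  · by_contra! hne
    obtain ⟨hup, hvp, huq, hvq, hxy', hyx'⟩ := hne
    rcases hdom' u hup huq with hu | hu <;> rcases hdom' v hvp hvq with hv | hv
    · exact hT.isAcyclic.not_adj_of_adj_of_adj hu huv hv
    · have := hT.isAcyclic.eq_and_eq_of_adj_of_adj_of_adj hpq hnadj hu huv hv.symm hpx hxy hyq
      exact hxy' this.1 this.2
    · have := hT.isAcyclic.eq_and_eq_of_adj_of_adj_of_adj hpq hnadj hv huv.symm hu.symm hpx hxy hyq
      exact hyx' this.2 this.1
    · exact hT.isAcyclic.not_adj_of_adj_of_adj hu huv hv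

theorem IsTree.exists_center_or_isDoubleBroom_of_dominating (hT : T.IsTree) {p q : V}
    (hdom : ∀ v, v ∈ insert p (T.neighborSet p) ∨ v ∈ insert q (T.neighborSet q)) :
    (∃ u, ∀ v, T.dist u v ≤ 2) ∨ IsDoubleBroom T := by
  by_cases hnear : p = q ∨ T.Adj p q ∨ ∃ m, T.Adj p m ∧ T.Adj m q
  · left
    obtain ⟨m, hmp, hmq⟩ : ∃ m, T.dist m p ≤ 1 ∧ T.dist m q ≤ 1 := by
      rcases hnear with rfl | h | ⟨m, hpm, hmq⟩
      · exact ⟨p, by simp, by simp⟩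
      · exact ⟨p, by simp, (dist_eq_one_iff_adj.2 h).le⟩
      · exact ⟨m, (dist_eq_one_iff_adj.2 hpm.symm).le, (dist_eq_one_iff_adj.2 hmq).le⟩
    exact ⟨m, hT.connected.forall_dist_le_two_of_dominating hmp hmq hdom⟩
  · push Not at hnear
    exact .inr (hT.isDoubleBroom_of_dominating hnear.1 hnear.2.1 hnear.2.2 hdom)

theorem IsTree.exists_center_or_isDoubleBroom_of_subsingleton_diff [Nontrivial V]
    (hT : T.IsTree) {A C : Set V} {s : V} (hcover : ∀ v, v ∈ A ∨ v = s ∨ v ∈ C)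
    (hC : T.IsIndepSet C) (htr : ∀ a ∈ A, ∀ x ∈ C, T.Adj s a ∨ T.Adj a x ∨ T.Adj s x)
    (hA : (A \ T.neighborSet s).Subsingleton) :
    (∃ u, ∀ v, T.dist u v ≤ 2) ∨ IsDoubleBroom T := by
  by_cases hA' : (A \ T.neighborSet s).Nonempty
  · obtain ⟨a, haA, hsa⟩ := hA'
    refine hT.exists_center_or_isDoubleBroom_of_dominating (p := s) (q := a) fun v => ?_
    rcases hcover v with hv | rfl | hv
    · by_cases hsv : T.Adj s v
      · exact .inl (.inr hsv)
      · exact .inr (.inl (hA ⟨hv, hsv⟩ ⟨haA, hsa⟩))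
    · exact .inl (.inl rfl)
    · rcases htr a haA v hv with h | h | h
      · exact absurd h hsa
      · exact .inr (.inr h)
      · exact .inl (.inr h)
  · refine .inl ⟨s, hT.connected.forall_dist_le_two_of_isVertexCover (W := insert s A)
      (fun v w hvw => ?_) (Set.insert_subset_insert fun a ha => ?_)⟩
    · rcases hcover v with hv | rfl | hv
      · exact .inl (.inr hv)
      · exact .inl (.inl rfl)
      · rcases hcover w with hw | rfl | hw
        · exact .inr (.inr hw)
        · exact .inr (.inl rfl)
        · exact absurd hvw (hC hv hw hvw.ne)
    · by_contra hsa
      exact hA' ⟨a, ha, hsa⟩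

theorem IsTree.exists_center_or_isDoubleBroom_of_singleton_class [Nontrivial V]
    (hT : T.IsTree) {A C : Set V} {s : V} (hcover : ∀ v, v ∈ A ∨ v = s ∨ v ∈ C)
    (hA : T.IsIndepSet A) (hC : T.IsIndepSet C)
    (htr : ∀ a ∈ A, ∀ x ∈ C, T.Adj s a ∨ T.Adj a x ∨ T.Adj s x) :
    (∃ u, ∀ v, T.dist u v ≤ 2) ∨ IsDoubleBroom T := by
  have hcomplete : ∀ a ∈ A \ T.neighborSet s, ∀ x ∈ C \ T.neighborSet s, T.Adj a x :=
    fun a ha x hx => ((htr a ha.1 x hx.1).resolve_left ha.2).resolve_right hx.2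
  rcases hT.isAcyclic.subsingleton_or_subsingleton_of_forall_adj hcomplete with h | h
  · exact hT.exists_center_or_isDoubleBroom_of_subsingleton_diff hcover hC htr h
  · refine hT.exists_center_or_isDoubleBroom_of_subsingleton_diff (A := C) (C := A)
      (fun v => by have := hcover v; tauto) hA
      (fun x hx a ha => by have := htr a ha x hx; grind [T.adj_comm]) h

theorem IsTree.exists_center_or_isDoubleBroom_of_pair_class (hT : T.IsTree) {A C : Set V}
    {s y : V} (hsy : s ≠ y) (hcover : ∀ v, v ∈ A ∨ v = s ∨ v = y ∨ v ∈ C) (hyA : y ∉ A)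
    (hyC : ∀ x ∈ C, T.Adj y x) (hC : C.Nontrivial)
    (htr : ∀ a ∈ A, ∀ x ∈ C, T.Adj s a ∨ T.Adj a x ∨ T.Adj s x) :
    (∃ u, ∀ v, T.dist u v ≤ 2) ∨ IsDoubleBroom T := by
  obtain ⟨x, hxC, hsx⟩ : ∃ x ∈ C, ¬T.Adj s x := by
    by_contra! h
    obtain ⟨x, hx, x', hx', hxx'⟩ := hC
    exact hsy <| hT.isAcyclic.eq_of_adj_of_adj hxx' (h x hx).symm (h x' hx')
      (hyC x hx).symm (hyC x' hx')
  by_cases hx : ∀ x' ∈ C, ¬T.Adj s x' → x' = x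
  · refine hT.exists_center_or_isDoubleBroom_of_dominating (p := s) (q := x) fun v => ?_
    rcases hcover v with hv | rfl | rfl | hv
    · rcases htr v hv x hxC with h | h | h
      · exact .inl (.inr h)
      · exact .inr (.inr h.symm)
      · exact absurd h hsx
    · exact .inl (.inl rfl)
    · exact .inr (.inr (hyC x hxC).symm)
    · by_cases hsv : T.Adj s v
      · exact .inl (.inr hsv)
      · exact .inr (.inl (hx v hv hsv))
  · push Not at hx
    obtain ⟨x', hx'C, hsx', hx'x⟩ := hx
    have hA : ∀ a ∈ A, T.Adj s a := fun a ha => by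
      by_contra hsa
      have hax := (htr a ha x hxC).resolve_left hsa |>.resolve_right hsx
      have hax' := (htr a ha x' hx'C).resolve_left hsa |>.resolve_right hsx'
      exact hyA (hT.isAcyclic.eq_of_adj_of_adj hx'x.symm hax.symm hax' (hyC x hxC).symm
        (hyC x' hx'C) ▸ ha)
    refine hT.exists_center_or_isDoubleBroom_of_dominating (p := s) (q := y) fun v => ?_
    rcases hcover v with hv | rfl | rfl | hv
    · exact .inl (.inr (hA v hv))
    · exact .inl (.inl rfl)
    · exact .inr (.inl rfl)
    · exact .inr (.inr (hyC v hv))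

theorem IsTree.exists_center_or_isDoubleBroom_of_partition [Nontrivial V] (hT : T.IsTree)
    {A B C : Set V} {s : V} (hcover : ∀ v, v ∈ A ∨ v ∈ B ∨ v ∈ C) (hA : T.IsIndepSet A)
    (hC : T.IsIndepSet C) (hBA : ∀ b ∈ B, b ∉ A) (hs : s ∈ B) (hCne : C.Nonempty)
    (htr : ∀ a ∈ A, ∀ b ∈ B, ∀ x ∈ C, T.Adj a b ∨ T.Adj a x ∨ T.Adj b x)
    (hBC : ∀ b ∈ B, b ≠ s → ∀ x ∈ C, T.Adj b x) :
    (∃ u, ∀ v, T.dist u v ≤ 2) ∨ IsDoubleBroom T := by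
  have htr_s : ∀ a ∈ A, ∀ x ∈ C, T.Adj s a ∨ T.Adj a x ∨ T.Adj s x := fun a ha x hx => by
    have := htr a ha s hs x hx
    grind [T.adj_comm]
  obtain ⟨x₀, hx₀⟩ := hCne
  by_cases hCs : C.Subsingleton
  · refine hT.exists_center_or_isDoubleBroom_of_subsingleton_diff (A := B) (C := A) (s := x₀)
      (fun v => ?_) hA (fun b hb a ha => ?_) fun b hb b' hb' => ?_
    · have := hcover v
      have : v ∈ C → v = x₀ := fun h => hCs h hx₀
      tauto
    · have := htr a ha b hb x₀ hx₀
      grind [T.adj_comm]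
    · have hBs : ∀ b ∈ B \ T.neighborSet x₀, b = s := fun b hb => by
        by_contra hbs
        exact hb.2 (hBC b hb.1 hbs x₀ hx₀).symm
      exact (hBs b hb).trans (hBs b' hb').symm
  · rw [Set.not_subsingleton_iff] at hCs
    by_cases hy : ∃ y ∈ B, y ≠ s
    · obtain ⟨y, hy, hys⟩ := hy
      have hB : (B \ {s}).Subsingleton :=
        (hT.isAcyclic.subsingleton_or_subsingleton_of_forall_adj fun b hb x hx =>
          hBC b hb.1 hb.2 x hx).resolve_right hCs.not_subsingleton
      refine hT.exists_center_or_isDoubleBroom_of_pair_class hys.symm (fun v => ?_) (hBA y hy)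
        (hBC y hy hys) hCs htr_s
      have := hcover v
      have : v ∈ B → v ≠ s → v = y := fun h hvs => hB ⟨h, hvs⟩ ⟨hy, hys⟩
      tauto
    · push Not at hy
      refine hT.exists_center_or_isDoubleBroom_of_singleton_class (fun v => ?_) hA hC htr_s
      have := hcover v
      have := hy v
      tauto

theorem IsTree.exists_center_or_isDoubleBroom_of_edgeCompellingColorable_three [Finite V]
    [Nontrivial V] (hT : T.IsTree) (h : T.EdgeCompellingColorable 3) :
    (∃ u, ∀ v, T.dist u v ≤ 2) ∨ IsDoubleBroom T := by
  obtain ⟨c, hc, hsurj, hcomp⟩ := h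
  obtain ⟨ℓ, s, hℓs, hleaf⟩ := hT.exists_leaf
  have hℓs' : c ℓ ≠ c s := hc hℓs
  obtain ⟨k, hkℓ, hks⟩ : ∃ k, k ≠ c ℓ ∧ k ≠ c s := by
    have : ∀ i j : Fin 3, ∃ k, k ≠ i ∧ k ≠ j := by decide
    exact this _ _
  have hindep : ∀ i, T.IsIndepSet {v | c v = i} :=
    fun i u hu v hv _ huv => hc huv (hu.trans hv.symm)
  have htr : ∀ a ∈ {v | c v = c ℓ}, ∀ b ∈ {v | c v = c s}, ∀ x ∈ {v | c v = k},
      T.Adj a b ∨ T.Adj a x ∨ T.Adj b x := fun a ha b hb x hx =>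
    hcomp.adj_or_adj_or_adj (by rwa [ha, hb]) (by rw [ha, hx]; exact hkℓ.symm)
      (by rw [hb, hx]; exact hks.symm)
  refine hT.exists_center_or_isDoubleBroom_of_partition
    (fun v => show c v = c ℓ ∨ c v = c s ∨ c v = k by omega) (hindep _) (hindep _)
    (fun b hb hba => hℓs' (hba.symm.trans hb)) rfl (hsurj k) htr fun b hb hbs x hx => ?_
  -- `ℓ` is adjacent only to `s`, so in the triple `ℓ, b, x` the edge must be `b x`.
  rcases htr ℓ rfl b hb x hx with h | h | h
  · exact absurd (hleaf b h) hbs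
  · exact absurd (by rw [← hleaf x h]; exact hx) hks.symm
  · exact h

end SimpleGraph

/-- A tree on at least two vertices has Edge-compelling chromatic number 3 iff it has
radius 2 or is a double broom. -/
theorem tree_edgeCompellingChromNum_eq_three_iff {V : Type*} [Fintype V]
    (T : SimpleGraph V) (hT : T.IsTree) (hcard : 2 ≤ Fintype.card V) :
    edgeCompellingChromNum T = 3 ↔ graphRadius T = 2 ∨ IsDoubleBroom T := by
  have : Nontrivial V := Fintype.one_lt_card_iff_nontrivial.1 hcard
  obtain ⟨v, hadj⟩ := hT.connected.preconnected.exists_adj_of_nontrivial (Classical.arbitrary V)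
  have hchrom : edgeCompellingChromNum T = 3 ↔
      T.EdgeCompellingColorable 3 ∧ ¬T.EdgeCompellingColorable 2 := by
    rw [edgeCompellingChromNum_eq_sInf, Nat.sInf_eq_iff_of_ne_zero three_ne_zero]
    refine and_congr_right fun _ => ⟨fun h => h 2 (by norm_num), fun h m hm hm' => ?_⟩
    obtain rfl : m = 2 := by have := hm'.two_le hadj; omega
    exact h hm'
  have hrad : graphRadius T = 2 ↔ graphRadius T ≤ 2 ∧ ¬graphRadius T ≤ 1 := by omega
  rw [hchrom, hrad, graphRadius_le_iff, graphRadius_le_iff, hT.edgeCompellingColorable_two_iff]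
  constructor
  · rintro ⟨h3, h2⟩
    exact (hT.exists_center_or_isDoubleBroom_of_edgeCompellingColorable_three h3).imp
      (⟨·, h2⟩) id
  · rintro (⟨h, h2⟩ | h)
    · obtain ⟨u, hu⟩ := h
      obtain ⟨w, hw⟩ : ∃ w, 1 < T.dist u w := by push Not at h2; exact h2 u
      exact ⟨hT.edgeCompellingColorable_of_forall_dist_le (w := w) one_le_two hu (by grind),
        h2⟩
    · exact ⟨hT.edgeCompellingColorable_three_of_isDoubleBroom h,
        h.not_exists_forall_dist_le_one hT.connected⟩
end

section
/- If a connected graph G has Edge-compelling chromatic number 3, then the diameter of G is at most 5. -/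
open SimpleGraph

/-! Suppose `G.dist u v ≥ 6` and let `x₀, …, x₆` start a shortest walk from `u` to `v`.
Path vertices whose indices differ by at least 2 are non-adjacent, so no three of them with
pairwise index gaps at least 2 carry three different colors; this forces the path to alternate
between two colors. A vertex `w` of the third color then forms a rainbow triple with `xᵢ, xⱼ`
whenever `i, j` have different parity and `j ≥ i + 2`, so `w` is adjacent to `xᵢ` or `xⱼ`.
But `w` is adjacent to two path vertices only if their indices differ by at most 2, so
the pairs `(0, 3), (0, 5), (1, 6), (3, 6)` cannot all be covered. -/

namespace SimpleGraph

variable {V : Type*} {G : SimpleGraph V}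

lemma Walk.dist_getVert_getVert_of_length_eq_dist {u v : V} {p : G.Walk u v}
    (hp : p.length = G.dist u v) {i j : ℕ} (hij : i ≤ j) (hj : j ≤ p.length) :
    G.dist (p.getVert i) (p.getVert j) = j - i := by
  have hsub : ((p.drop i).take (j - i)).IsSubwalk p :=
    (isSubwalk_take _ _).trans (isSubwalk_drop _ _)
  have h := length_eq_dist_of_subwalk hp hsub
  rw [take_length, drop_length, drop_getVert, Nat.add_sub_cancel' hij,
    min_eq_left (by omega)] at h
  exact h.symm

section Geodesic

variable {x : ℕ → V} {n : ℕ} (hx : ∀ i j, i ≤ j → j ≤ n → G.dist (x i) (x j) = j - i)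
include hx

lemma adj_succ_of_forall_dist_eq_sub {i : ℕ} (hi : i < n) : G.Adj (x i) (x (i + 1)) :=
  dist_eq_one_iff_adj.mp (by rw [hx i (i + 1) (by omega) (by omega)]; omega)

lemma not_adj_of_forall_dist_eq_sub {i j : ℕ} (hij : i + 2 ≤ j) (hj : j ≤ n) :
    ¬G.Adj (x i) (x j) := fun h => by
  have := hx i j (by omega) hj
  rw [dist_eq_one_iff_adj.mpr h] at this
  omega

lemma not_adj_and_adj_of_forall_dist_eq_sub {i j : ℕ} (hij : i + 3 ≤ j) (hj : j ≤ n) (w : V) :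
    ¬(G.Adj w (x i) ∧ G.Adj w (x j)) := fun ⟨hi, hj'⟩ => by
  have := dist_le ((Walk.nil.cons hj').cons hi.symm)
  have := hx i j (by omega) hj
  simp only [Walk.length_cons, Walk.length_nil] at *
  omega

end Geodesic

end SimpleGraph

theorem apply_eq_apply_mod_two_of_no_far_rainbow {α : Type*} (col : ℕ → α)
    (hproper : ∀ i < 6, col i ≠ col (i + 1))
    (hfar : ∀ i j k, i + 2 ≤ j → j + 2 ≤ k → k ≤ 6 →
      col i = col j ∨ col i = col k ∨ col j = col k) :
    ∀ i ≤ 6, col i = col (i % 2) := by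
  have := hproper 0; have := hproper 1; have := hproper 2; have := hproper 3
  have := hproper 4; have := hproper 5
  have := hfar 0 2 4; have := hfar 0 2 5; have := hfar 0 2 6; have := hfar 0 3 5
  have := hfar 0 3 6; have := hfar 0 4 6; have := hfar 1 3 5; have := hfar 1 3 6
  have := hfar 1 4 6; have := hfar 2 4 6
  -- Otherwise `col 4, col 5, col 6` avoid `col 1`, which forces `col 3 = col 1` and then
  -- `col 5 = col 0 = col 6`.
  have h20 : col 2 = col 0 := by grind
  have h46 : col 4 = col 6 := by grind
  have h24 : col 2 = col 4 := by grind
  have h31 : col 3 = col 1 := by grind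
  have h53 : col 5 = col 3 := by grind
  intro i hi
  interval_cases i <;> simp_all

section Compelling

variable {V : Type*} {G : SimpleGraph V}

lemma exists_coloring_of_compellingChromNum_eq {P : Set V → Prop} {k : ℕ}
    (h : compellingChromNum G P = k) (hk : k ≠ 0) :
    ∃ c : V → Fin k, ProperColoring G c ∧ Function.Surjective c ∧ Compels c P := by
  subst h
  exact Nat.sInf_mem (Nat.nonempty_of_pos_sInf (Nat.pos_of_ne_zero hk))

lemma Compels.adj_of_rainbow {c : V → Fin 3} (hc : Compels c (HasEdge G)) {a b w : V}
    (hab : c a ≠ c b) (haw : c a ≠ c w) (hbw : c b ≠ c w) :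
    G.Adj a b ∨ G.Adj a w ∨ G.Adj b w := by
  classical
  let f : Fin 3 → V := fun i => if i = c a then a else if i = c b then b else w
  have hf : IsRainbow c f := by
    intro i
    simp only [f]
    split_ifs with hia hib
    · exact hia.symm
    · exact hib.symm
    · omega
  obtain ⟨_, ⟨i, rfl⟩, _, ⟨j, rfl⟩, hij⟩ := hc f hf
  simp only [f] at hij
  split_ifs at hij <;> grind [G.adj_symm, G.irrefl]

variable {c : V → Fin 3}

theorem Compels.false_of_geodesic_of_length_six (hc : Compels c (HasEdge G))
    (hprop : ProperColoring G c) (hsurj : Function.Surjective c) {x : ℕ → V}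
    (hx : ∀ i j, i ≤ j → j ≤ 6 → G.dist (x i) (x j) = j - i) : False := by
  have hadj : ∀ {i}, i < 6 → G.Adj (x i) (x (i + 1)) := adj_succ_of_forall_dist_eq_sub hx
  have hnadj : ∀ {i j}, i + 2 ≤ j → j ≤ 6 → ¬G.Adj (x i) (x j) :=
    not_adj_of_forall_dist_eq_sub hx
  have hper := apply_eq_apply_mod_two_of_no_far_rainbow (c ∘ x) (fun i hi => hprop (hadj hi))
    fun i j k hij hjk hk => by
      by_contra! h
      rcases hc.adj_of_rainbow h.1 h.2.1 h.2.2 with h | h | h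
      · exact hnadj hij (by omega) h
      · exact hnadj (by omega : i + 2 ≤ k) hk h
      · exact hnadj hjk hk h
  have hcommon : ∀ {i j}, i + 3 ≤ j → j ≤ 6 → ∀ w, ¬(G.Adj w (x i) ∧ G.Adj w (x j)) :=
    not_adj_and_adj_of_forall_dist_eq_sub hx
  have h01 : c (x 0) ≠ c (x 1) := hprop (hadj (by omega : 0 < 6))
  have hthird : ∀ a b : Fin 3, ∃ γ, γ ≠ a ∧ γ ≠ b := by decide
  obtain ⟨γ, hγ0, hγ1⟩ := hthird (c (x 0)) (c (x 1))
  obtain ⟨w, rfl⟩ := hsurj γ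
  have hcover : ∀ i j, i % 2 ≠ j % 2 → i + 2 ≤ j → j ≤ 6 → G.Adj w (x i) ∨ G.Adj w (x j) := by
    intro i j hij hij' hj
    have hi := hper i (by omega)
    have hj' := hper j hj
    simp only [Function.comp] at hi hj'
    have hcol : c (x i) ≠ c (x j) ∧ c (x i) ≠ c w ∧ c (x j) ≠ c w := by
      rw [hi, hj', show j % 2 = 1 - i % 2 by omega]
      rcases Nat.mod_two_eq_zero_or_one i with h | h <;> rw [h]
      · exact ⟨h01, hγ0.symm, hγ1.symm⟩
      · exact ⟨h01.symm, hγ1.symm, hγ0.symm⟩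
    rcases hc.adj_of_rainbow hcol.1 hcol.2.1 hcol.2.2 with h | h | h
    · exact absurd h (hnadj hij' hj)
    · exact .inl h.symm
    · exact .inr h.symm
  have := hcover 0 3 (by decide) (by omega) (by omega)
  have := hcover 0 5 (by decide) (by omega) (by omega)
  have := hcover 1 6 (by decide) (by omega) (by omega)
  have := hcover 3 6 (by decide) (by omega) (by omega)
  have := hcommon (i := 0) (j := 3) (by omega) (by omega) w
  have := hcommon (i := 0) (j := 5) (by omega) (by omega) w
  have := hcommon (i := 0) (j := 6) (by omega) (by omega) w
  have := hcommon (i := 1) (j := 5) (by omega) (by omega) w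
  have := hcommon (i := 3) (j := 6) (by omega) (by omega) w
  tauto

theorem Compels.dist_le_five (hc : Compels c (HasEdge G)) (hprop : ProperColoring G c)
    (hsurj : Function.Surjective c) (u v : V) : G.dist u v ≤ 5 := by
  by_contra! h
  obtain ⟨p, hp⟩ := exists_walk_of_dist_ne_zero (by omega : G.dist u v ≠ 0)
  exact hc.false_of_geodesic_of_length_six hprop hsurj (x := p.getVert) fun i j hij hj =>
    p.dist_getVert_getVert_of_length_eq_dist hp hij (by omega)

end Compelling

theorem diameter_le_five_of_edgeCompellingChromNum_eq_three_general {V : Type*}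
    (G : SimpleGraph V) (h : edgeCompellingChromNum G = 3) :
    ∀ u v : V, G.dist u v ≤ 5 := by
  obtain ⟨c, hprop, hsurj, hc⟩ := exists_coloring_of_compellingChromNum_eq h (by norm_num)
  exact hc.dist_le_five hprop hsurj

/-- A connected graph with Edge-compelling chromatic number 3 has diameter at most 5. -/
theorem diameter_le_five_of_edgeCompellingChromNum_eq_three {V : Type*} [Fintype V]
    (G : SimpleGraph V) (hconn : G.Connected) (h : edgeCompellingChromNum G = 3) :
    ∀ u v : V, G.dist u v ≤ 5 :=
  diameter_le_five_of_edgeCompellingChromNum_eq_three_general G h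
end

section
/- Let G be a graph of order n with χ(G) ≥ n/2 + 1 and at least one edge. Then every proper coloring of G with χ(G) colors is Edge-compelling, and hence the Edge-compelling chromatic number of G equals χ(G). -/
open SimpleGraph

/-! A rainbow committee of a coloring with `k = χ(G)` colors that contains no edge is an
independent set of size `k`. Giving it a single color and every other vertex a color of its
own is a proper coloring with `n - k + 1` colors, so `k ≤ n - k + 1`, which contradicts
`k ≥ n/2 + 1`. -/

namespace SimpleGraph

variable {V : Type*} (G : SimpleGraph V)

theorem not_hasEdge_iff_isIndepSet {S : Set V} : ¬ HasEdge G S ↔ G.IsIndepSet S := by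
  simp only [HasEdge, not_exists, not_and, isIndepSet_iff, Set.Pairwise]
  exact ⟨fun h u hu v hv _ => h u hu v hv, fun h u hu v hv huv => h hu hv huv.ne huv⟩

def Coloring.ofIsIndepSet {s : Set V} [DecidablePred (· ∈ s)] (hs : G.IsIndepSet s) :
    G.Coloring (Option {v // v ∉ s}) :=
  Coloring.mk (fun v => if h : v ∈ s then none else some ⟨v, h⟩) fun {u v} huv => by
    by_cases hu : u ∈ s <;> by_cases hv : v ∈ s
    · exact absurd huv (hs hu hv huv.ne)
    all_goals simp [hu, hv, huv.ne]

theorem IsIndepSet.chromaticNumber_add_card_le [Fintype V] {s : Finset V}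
    (hs : G.IsIndepSet s) : G.chromaticNumber + s.card ≤ Fintype.card V + 1 := by
  classical
  have hcard : Fintype.card (Option {v // v ∉ (s : Set V)}) = Fintype.card V - s.card + 1 := by
    simp [Fintype.card_option, Fintype.card_subtype_compl]
  have hle := (Coloring.ofIsIndepSet G hs).colorable.chromaticNumber_le
  rw [hcard] at hle
  calc G.chromaticNumber + s.card
      ≤ ((Fintype.card V - s.card + 1 : ℕ) : ℕ∞) + s.card := by gcongr
    _ = Fintype.card V + 1 := by
      norm_cast
      have := s.card_le_univ
      omega

end SimpleGraph

theorem ProperColoring.chromaticNumber_le {V : Type*} {G : SimpleGraph V} {k : ℕ}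
    {c : V → Fin k} (hc : ProperColoring G c) : G.chromaticNumber ≤ k := by
  simpa using (Coloring.mk c fun h => hc h).colorable.chromaticNumber_le

theorem IsRainbow.injective {V : Type*} {k : ℕ} {c : V → Fin k} {f : Fin k → V}
    (hf : IsRainbow c f) : Function.Injective f :=
  fun i j hij => by rw [← hf i, ← hf j, hij]

theorem compels_hasEdge_of_card_add_two_le {V : Type*} [Fintype V] (G : SimpleGraph V) {k : ℕ}
    (hχ : k ≤ G.chromaticNumber) (hn : Fintype.card V + 2 ≤ 2 * k) (c : V → Fin k) :
    Compels c (HasEdge G) := by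
  intro f hf
  by_contra hnone
  let s : Finset V := Finset.univ.map ⟨f, hf.injective⟩
  have hs : G.IsIndepSet s := by
    simpa [s, ← not_hasEdge_iff_isIndepSet] using hnone
  have hcard : s.card = k := by simp [s]
  have : (k + k : ℕ∞) ≤ Fintype.card V + 1 :=
    calc (k + k : ℕ∞) ≤ G.chromaticNumber + s.card := by rw [hcard]; gcongr
      _ ≤ Fintype.card V + 1 := IsIndepSet.chromaticNumber_add_card_le G hs
  norm_cast at this
  omega

theorem compellingChromNum_eq_of_chromaticNumber_eq {V : Type*} {G : SimpleGraph V}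
    {P : Set V → Prop} {k : ℕ} (hk : G.chromaticNumber = k)
    (hP : ∀ c : V → Fin k, ProperColoring G c → Function.Surjective c → Compels c P) :
    compellingChromNum G P = k := by
  obtain ⟨C⟩ : G.Colorable k := by rw [← chromaticNumber_le_iff_colorable, hk]
  have hsurj : Function.Surjective C := le_chromaticNumber_iff_forall_surjective.mp hk.ge C
  have hproper : ProperColoring G C := fun _ _ h => C.valid h
  have hmem : k ∈ {m : ℕ | ∃ c : V → Fin m,
      ProperColoring G c ∧ Function.Surjective c ∧ Compels c P} :=
    ⟨C, hproper, hsurj, hP C hproper hsurj⟩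
  refine le_antisymm (Nat.sInf_le hmem) (le_csInf ⟨k, hmem⟩ ?_)
  rintro m ⟨c, hc, -, -⟩
  exact_mod_cast hk ▸ hc.chromaticNumber_le

theorem edgeCompellingChromNum_eq_chromaticNumber_of_large_chromaticNumber_general
    {V : Type*} [Fintype V] (G : SimpleGraph V) {k : ℕ}
    (hk : G.chromaticNumber = k)
    (hbig : (Fintype.card V : ℚ) / 2 + 1 ≤ (k : ℚ)) :
    (∀ c : V → Fin k, ProperColoring G c → Function.Surjective c →
      Compels c (HasEdge G)) ∧
    edgeCompellingChromNum G = k := by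
  have hn : Fintype.card V + 2 ≤ 2 * k := by
    exact_mod_cast (by linarith : (Fintype.card V : ℚ) + 2 ≤ 2 * k)
  have hcompels : ∀ c : V → Fin k, ProperColoring G c → Function.Surjective c →
      Compels c (HasEdge G) :=
    fun c _ _ => compels_hasEdge_of_card_add_two_le G hk.ge hn c
  exact ⟨hcompels, compellingChromNum_eq_of_chromaticNumber_eq hk hcompels⟩

/-- If `G` has order `n`, at least one edge, and chromatic number `k ≥ n/2 + 1`, then
every proper coloring of `G` with `k` colors is Edge-compelling, and the Edge-compelling
chromatic number equals `k = χ(G)`. -/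
theorem edgeCompellingChromNum_eq_chromaticNumber_of_large_chromaticNumber
    {V : Type*} [Fintype V] (G : SimpleGraph V) {k : ℕ}
    (hk : G.chromaticNumber = k) (hedge : ∃ u v : V, G.Adj u v)
    (hbig : (Fintype.card V : ℚ) / 2 + 1 ≤ (k : ℚ)) :
    (∀ c : V → Fin k, ProperColoring G c → Function.Surjective c →
      Compels c (HasEdge G)) ∧
    edgeCompellingChromNum G = k :=
  edgeCompellingChromNum_eq_chromaticNumber_of_large_chromaticNumber_general G hk hbig
end

section
/- For each m ≥ 2, the split graph S_m obtained from an independent set {u_1,...,u_m} and a clique {v_1,...,v_m} by joining u_i to v_j whenever i ≠ j has chromatic number m, and in every proper coloring with m colors the set {u_1,...,u_m} is a rainbow committee that is independent; hence S_m is not Edge-compelling-colorable with m colors. -/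
open SimpleGraph

/-- The split graph `S_m`: an independent set `u_1, …, u_m` (left) and a clique
`v_1, …, v_m` (right), with `u_i` adjacent to `v_j` exactly when `i ≠ j`. -/
def splitGraph (m : ℕ) : SimpleGraph (Fin m ⊕ Fin m) :=
  SimpleGraph.fromRel (fun a b =>
    match a, b with
    | Sum.inr i, Sum.inr j => i ≠ j
    | Sum.inl i, Sum.inr j => i ≠ j
    | _, _ => False)

/-!
The right half `v_1, …, v_m` of `S_m` is a clique, so it needs `m` colors and, with exactly `m`
colors, takes every color once. Then `u_i`, adjacent to every `v_j` with `j ≠ i`, is forced to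
share the color of `v_i`; hence the left half `u_1, …, u_m` is itself a rainbow committee, and it
is independent.
-/

section splitGraph

variable (m : ℕ)

@[simp]
lemma splitGraph_adj_inl_inr (i j : Fin m) :
    (splitGraph m).Adj (Sum.inl i) (Sum.inr j) ↔ i ≠ j := by
  simp [splitGraph, fromRel_adj]

@[simp]
lemma splitGraph_adj_inr_inr (i j : Fin m) :
    (splitGraph m).Adj (Sum.inr i) (Sum.inr j) ↔ i ≠ j := by
  simp [splitGraph, fromRel_adj]
  tauto

lemma splitGraph_not_adj_inl_inl (i j : Fin m) :
    ¬(splitGraph m).Adj (Sum.inl i) (Sum.inl j) := by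
  simp [splitGraph, fromRel_adj]

lemma splitGraph_pairwise_adj_inr :
    Pairwise fun i j : Fin m ↦ (splitGraph m).Adj (Sum.inr i) (Sum.inr j) :=
  fun _ _ ↦ (splitGraph_adj_inr_inr m _ _).2

lemma splitGraph_isIndepSet_range_inl : (splitGraph m).IsIndepSet (Set.range Sum.inl) := by
  rintro _ ⟨i, rfl⟩ _ ⟨j, rfl⟩ -
  exact splitGraph_not_adj_inl_inl m i j

def splitGraph.diagonalColoring : (splitGraph m).Coloring (Fin m) :=
  Coloring.mk (Sum.elim id id) <| by
    rintro (i | i) (j | j) hadj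
    · exact absurd hadj (splitGraph_not_adj_inl_inl m i j)
    · exact (splitGraph_adj_inl_inr m i j).1 hadj
    · exact ((splitGraph_adj_inl_inr m j i).1 hadj.symm).symm
    · exact (splitGraph_adj_inr_inr m i j).1 hadj

lemma chromaticNumber_splitGraph : (splitGraph m).chromaticNumber = m :=
  le_antisymm (Colorable.chromaticNumber_le ⟨splitGraph.diagonalColoring m⟩) <|
    le_chromaticNumber_of_pairwise_adj (by simp) Sum.inr (splitGraph_pairwise_adj_inr m)

end splitGraph

def ProperColoring.toColoring {V : Type*} {k : ℕ} {G : SimpleGraph V} {c : V → Fin k}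
    (hc : ProperColoring G c) : G.Coloring (Fin k) :=
  Coloring.mk c fun hadj ↦ hc hadj

namespace ProperColoring

variable {m : ℕ} {c : Fin m ⊕ Fin m → Fin m}

lemma bijective_comp_inr (hc : ProperColoring (splitGraph m) c) :
    Function.Bijective (c ∘ Sum.inr) :=
  Finite.injective_iff_bijective.1 <|
    hc.toColoring.injective_comp_of_pairwise_adj Sum.inr (splitGraph_pairwise_adj_inr m)

lemma apply_inl_eq_apply_inr (hc : ProperColoring (splitGraph m) c) (i : Fin m) :
    c (Sum.inl i) = c (Sum.inr i) := by
  obtain ⟨j, hj⟩ := hc.bijective_comp_inr.2 (c (Sum.inl i))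
  obtain rfl : i = j := by
    by_contra hij
    exact hc ((splitGraph_adj_inl_inr m i j).2 hij) hj.symm
  exact hj.symm

lemma bijective_comp_inl (hc : ProperColoring (splitGraph m) c) :
    Function.Bijective (c ∘ Sum.inl) := by
  convert hc.bijective_comp_inr using 1
  exact funext hc.apply_inl_eq_apply_inr

end ProperColoring

lemma exists_isRainbow_range_eq {V : Type*} {k : ℕ} {c : V → Fin k} {f : Fin k → V}
    (hf : Function.Bijective (c ∘ f)) : ∃ g, IsRainbow c g ∧ Set.range g = Set.range f := by
  let e := Equiv.ofBijective _ hf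
  exact ⟨f ∘ e.symm, e.apply_symm_apply, e.symm.surjective.range_comp f⟩

lemma not_hasEdge_of_isIndepSet {V : Type*} {G : SimpleGraph V} {S : Set V}
    (hS : G.IsIndepSet S) : ¬HasEdge G S := by
  rintro ⟨u, hu, v, hv, huv⟩
  exact hS hu hv huv.ne huv

theorem splitGraph_not_edge_compellable_general (m : ℕ) :
    (splitGraph m).chromaticNumber = m ∧
    (∀ c : Fin m ⊕ Fin m → Fin m, ProperColoring (splitGraph m) c →
      Function.Injective (fun i : Fin m => c (Sum.inl i))) ∧
    (∀ i j : Fin m, ¬(splitGraph m).Adj (Sum.inl i) (Sum.inl j)) ∧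
    ¬∃ c : Fin m ⊕ Fin m → Fin m, ProperColoring (splitGraph m) c ∧
      Function.Surjective c ∧ Compels c (HasEdge (splitGraph m)) := by
  refine ⟨chromaticNumber_splitGraph m, fun c hc ↦ hc.bijective_comp_inl.1,
    splitGraph_not_adj_inl_inl m, ?_⟩
  rintro ⟨c, hc, -, hcompels⟩
  obtain ⟨f, hrainbow, hrange⟩ := exists_isRainbow_range_eq hc.bijective_comp_inl
  exact not_hasEdge_of_isIndepSet (hrange ▸ splitGraph_isIndepSet_range_inl m)
    (hcompels f hrainbow)

/-- For `m ≥ 2`, the split graph `S_m` has chromatic number `m`; in every proper coloring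
with `m` colors the independent set `{u_1, …, u_m}` is a rainbow committee (one vertex of
each of the `m` colors) and is independent; hence `S_m` has no Edge-compelling coloring
with `m` colors. -/
theorem splitGraph_not_edge_compellable (m : ℕ) (hm : 2 ≤ m) :
    (splitGraph m).chromaticNumber = m ∧
    (∀ c : Fin m ⊕ Fin m → Fin m, ProperColoring (splitGraph m) c →
      Function.Injective (fun i : Fin m => c (Sum.inl i))) ∧
    (∀ i j : Fin m, ¬(splitGraph m).Adj (Sum.inl i) (Sum.inl j)) ∧
    ¬∃ c : Fin m ⊕ Fin m → Fin m, ProperColoring (splitGraph m) c ∧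
      Function.Surjective c ∧ Compels c (HasEdge (splitGraph m)) :=
  splitGraph_not_edge_compellable_general m
end

section
/- Let G be a graph with at least one edge, and consider a proper coloring of G using at least 2 colors. Then this proper coloring is Connected-compelling (every rainbow committee induces a connected subgraph) if and only if it is CDom-compelling (every rainbow committee is a connected dominating set of G). -/
open SimpleGraph

/-- Property `Connected`: the set induces a connected subgraph of `G`. -/
def InducesConnected {V : Type*} (G : SimpleGraph V) (S : Set V) : Prop :=
  (G.induce S).Connected

/-- The Connected-compelling chromatic number. -/
noncomputable def connCompellingChromNum {V : Type*} (G : SimpleGraph V) : ℕ :=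
  compellingChromNum G (InducesConnected G)

/-- `S` is a connected dominating set of `G`. -/
def IsCDS {V : Type*} (G : SimpleGraph V) (S : Set V) : Prop :=
  (G.induce S).Connected ∧ ∀ v ∉ S, ∃ u ∈ S, G.Adj u v

/-- For a graph with at least one edge and a proper coloring with at least 2 colors (each
used), the coloring is Connected-compelling iff it is CDom-compelling. -/
theorem connected_compelling_iff_cdom_compelling {V : Type*} [Fintype V]
    (G : SimpleGraph V) (hedge : ∃ u v : V, G.Adj u v) {k : ℕ} (hk : 2 ≤ k)
    (c : V → Fin k) (hp : ProperColoring G c) (hs : Function.Surjective c) :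
    Compels c (InducesConnected G) ↔ Compels c (IsCDS G) := by
  constructor
  · intro h f hf
    refine ⟨h f hf, ?_⟩
    intro v hv
    set f' : Fin k → V := Function.update f (c v) v with hf'def
    have hrf' : IsRainbow c f' := by
      intro i
      by_cases hi : i = c v
      · subst hi; simp [f']
      · simp [f', Function.update_of_ne hi, hf i]
    have hconn : (G.induce (Set.range f')).Connected := h f' hrf'
    have hvmem : v ∈ Set.range f' := ⟨c v, by simp [f']⟩
    haveI : Nontrivial (Fin k) := Fin.nontrivial_iff_two_le.mpr hk
    obtain ⟨i, hi⟩ := exists_ne (c v)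
    have hne : f' i ≠ v := by
      intro he
      have : c (f' i) = i := hrf' i
      rw [he] at this
      exact hi this.symm
    have hwmem : f' i ∈ Set.range f' := ⟨i, rfl⟩
    obtain ⟨p⟩ := hconn.preconnected ⟨v, hvmem⟩ ⟨f' i, hwmem⟩
    have hnn : ¬ p.Nil := SimpleGraph.Walk.not_nil_of_ne (by
      intro he
      exact hne (congrArg Subtype.val he).symm)
    have hadj := p.adj_snd hnn
    set w := p.getVert 1 with hwdef
    have hGadj : G.Adj v (w : V) := hadj
    obtain ⟨j, hj⟩ := w.2
    set u := (w : V)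
    have hjne : j ≠ c v := by
      intro he
      have huv : u = v := by rw [← hj, he]; simp [f']
      rw [huv] at hGadj
      exact G.irrefl hGadj
    refine ⟨u, ⟨j, ?_⟩, hGadj.symm⟩
    rw [← hj]
    simp [f', Function.update_of_ne hjne]
  · intro h f hf
    exact (h f hf).1
end

section
/- For a nontrivial connected graph G, the Connected-compelling chromatic number of G is at least max{χ(G), γ_c(G)} and at most χ(G) + γ_c(G). -/
open SimpleGraph

/-- The connected domination number of `G`. -/
noncomputable def connDominationNum {V : Type*} (G : SimpleGraph V) : ℕ :=
  sInf {n : ℕ | ∃ S : Set V, IsCDS G S ∧ S.ncard = n}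

/-! A connected-compelling colouring with `k` colours is a proper `k`-colouring, and each of
its rainbow committees is a connected dominating set of size `k`. For the upper bound, give the
vertices of a minimum connected dominating set `S` pairwise distinct fresh colours and colour the
rest by an optimal proper colouring: every rainbow committee then contains `S`, and any superset
of a connected dominating set induces a connected subgraph. -/

section

variable {V : Type*} {G : SimpleGraph V}

lemma IsCDS.induce_connected_of_subset {S R : Set V} (hS : IsCDS G S) (hSR : S ⊆ R) :
    (G.induce R).Connected := by
  obtain ⟨⟨u, hu⟩⟩ := hS.1.nonempty
  refine G.induce_connected_of_patches u (hSR hu) fun {v} hv => ?_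
  by_cases hvS : v ∈ S
  · exact ⟨S, hSR, hu, hvS, hS.1.preconnected _ _⟩
  · obtain ⟨w, hw, hwv⟩ := hS.2 v hvS
    have hconn : (G.induce (S ∪ {v})).Connected :=
      G.connected_induce_union hS.1.preconnected .of_subsingleton hw rfl hwv
    exact ⟨S ∪ {v}, Set.union_subset hSR (Set.singleton_subset_iff.2 hv), .inl hu, .inr rfl,
      hconn.preconnected _ _⟩

lemma exists_isCDS_ncard_eq_connDominationNum (hG : G.Connected) :
    ∃ S, IsCDS G S ∧ S.ncard = connDominationNum G :=
  Nat.sInf_mem (s := {n | ∃ S : Set V, IsCDS G S ∧ S.ncard = n}) ⟨_, Set.univ,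
    ⟨(induceUnivIso G).connected_iff.2 hG, fun v hv => absurd (Set.mem_univ v) hv⟩, rfl⟩

def CompellingColorable (G : SimpleGraph V) (P : Set V → Prop) (k : ℕ) : Prop :=
  ∃ c : V → Fin k, ProperColoring G c ∧ Function.Surjective c ∧ Compels c P

namespace CompellingColorable

variable {P : Set V → Prop} {k : ℕ}

lemma compellingChromNum_le (h : CompellingColorable G P k) : compellingChromNum G P ≤ k :=
  Nat.sInf_le h

lemma compellingColorable_compellingChromNum (h : CompellingColorable G P k) :
    CompellingColorable G P (compellingChromNum G P) :=
  Nat.sInf_mem (s := {k | CompellingColorable G P k}) ⟨k, h⟩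

lemma colorable (h : CompellingColorable G P k) : G.Colorable k :=
  let ⟨c, hc, _⟩ := h
  ⟨Coloring.mk c fun huv => hc huv⟩

end CompellingColorable

lemma compellingColorable_natCard {P : Set V → Prop} {α : Type*} [Finite α] (c : V → α)
    (hc : ∀ ⦃u v⦄, G.Adj u v → c u ≠ c v) (hsurj : Function.Surjective c)
    (hP : ∀ f : α → V, (∀ a, c (f a) = a) → P (Set.range f)) :
    CompellingColorable G P (Nat.card α) := by
  let e := Finite.equivFin α
  refine ⟨e ∘ c, fun u v huv h => hc huv (e.injective h), e.surjective.comp hsurj, fun f hf => ?_⟩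
  have := hP (f ∘ e) fun a => e.injective (by simpa using hf (e a))
  rwa [e.surjective.range_comp] at this

open Classical in
noncomputable def cdsColoring {β : Type*} (S : Set V) (C : V → β) : V → S ⊕ (C '' Sᶜ) :=
  fun v => if h : v ∈ S then .inl ⟨v, h⟩ else .inr ⟨C v, v, h, rfl⟩

section cdsColoring

variable {β : Type*} {S : Set V} {C : V → β}

lemma cdsColoring_of_mem {v : V} (hv : v ∈ S) : cdsColoring S C v = .inl ⟨v, hv⟩ := dif_pos hv

lemma cdsColoring_of_notMem {v : V} (hv : v ∉ S) : cdsColoring S C v = .inr ⟨C v, v, hv, rfl⟩ :=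
  dif_neg hv

lemma cdsColoring_eq_inl_iff {v : V} {s : S} : cdsColoring S C v = .inl s ↔ v = s := by
  by_cases hv : v ∈ S
  · simp [cdsColoring_of_mem hv, Subtype.ext_iff]
  · simp only [cdsColoring_of_notMem hv, reduceCtorEq, false_iff]
    exact fun h => hv (h ▸ s.2)

lemma cdsColoring_surjective : Function.Surjective (cdsColoring S C) := by
  rintro (⟨s, hs⟩ | ⟨_, v, hv, rfl⟩)
  · exact ⟨s, cdsColoring_of_mem hs⟩
  · exact ⟨v, cdsColoring_of_notMem hv⟩

lemma cdsColoring_adj_ne (hC : ∀ ⦃u v⦄, G.Adj u v → C u ≠ C v) ⦃u v : V⦄ (huv : G.Adj u v) :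
    cdsColoring S C u ≠ cdsColoring S C v := by
  by_cases hu : u ∈ S <;> by_cases hv : v ∈ S <;>
    simp [cdsColoring_of_mem, cdsColoring_of_notMem, hu, hv, huv.ne, Subtype.ext_iff, hC huv]

lemma subset_range_of_cdsColoring_rainbow {f : S ⊕ (C '' Sᶜ) → V}
    (hf : ∀ a, cdsColoring S C (f a) = a) : S ⊆ Set.range f :=
  fun s hs => ⟨.inl ⟨s, hs⟩, cdsColoring_eq_inl_iff.1 (hf _)⟩

end cdsColoring

lemma compellingColorable_of_isCDS [Finite V] {β : Type*} [Finite β] {S : Set V}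
    (hS : IsCDS G S) (C : G.Coloring β) :
    ∃ k ≤ S.ncard + Nat.card β, CompellingColorable G (InducesConnected G) k := by
  refine ⟨_, ?_, compellingColorable_natCard (cdsColoring S C)
    (cdsColoring_adj_ne fun _ _ h => C.valid h) cdsColoring_surjective
    fun f hf => hS.induce_connected_of_subset (subset_range_of_cdsColoring_rainbow hf)⟩
  rw [Nat.card_sum, Nat.card_coe_set_eq]
  exact Nat.add_le_add_left (Finite.card_subtype_le _) _

lemma isCDS_range_of_isRainbow {k : ℕ} (hk : 1 < k) {c : V → Fin k} (hc : ProperColoring G c)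
    (hcomp : Compels c (InducesConnected G)) {f : Fin k → V} (hf : IsRainbow c f) :
    IsCDS G (Set.range f) := by
  refine ⟨hcomp f hf, fun v hv => ?_⟩
  -- Put `v` in the place of its colour: the new committee is rainbow, hence connected, and has
  -- another member, so `v` has a neighbour in it; that neighbour has another colour, so lies in
  -- `range f`.
  set f' := Function.update f (c v) v
  have hf' : IsRainbow c f' := by
    intro i
    rcases eq_or_ne i (c v) with rfl | hi
    · simp [f']
    · simp [f', hi, hf i]
  have : Nontrivial (Fin k) := Fin.nontrivial_iff_two_le.2 hk
  obtain ⟨i, hi⟩ := exists_ne (c v)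
  have hv' : v ∈ Set.range f' := ⟨c v, by simp [f']⟩
  have hne : v ≠ f' i := fun h => hi (by rw [← hf' i, ← h])
  obtain ⟨w⟩ := (hcomp f' hf').preconnected ⟨v, hv'⟩ ⟨f' i, i, rfl⟩
  obtain ⟨j, hj⟩ := w.snd.2
  have hvw : G.Adj v (f' j) := hj ▸ w.adj_snd (w.not_nil_of_ne (hne <| congrArg Subtype.val ·))
  have hjv : j ≠ c v := fun h => hc hvw (by rw [hf' j, h])
  exact ⟨f' j, ⟨j, (Function.update_of_ne hjv _ _).symm⟩, hvw.symm⟩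

lemma CompellingColorable.connDominationNum_le {k : ℕ} {u v : V} (huv : G.Adj u v)
    (h : CompellingColorable G (InducesConnected G) k) : connDominationNum G ≤ k := by
  obtain ⟨c, hc, hsurj, hcomp⟩ := h
  have hk : 1 < k := Fin.nontrivial_iff_two_le.1 ⟨⟨c u, c v, hc huv⟩⟩
  have hf : IsRainbow c (Function.surjInv hsurj) := Function.surjInv_eq hsurj
  refine Nat.sInf_le ⟨_, isCDS_range_of_isRainbow hk hc hcomp hf, ?_⟩
  rw [Set.ncard_range_of_injective (Function.injective_surjInv hsurj), Nat.card_fin]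

end

/-- For a nontrivial connected graph `G`, the Connected-compelling chromatic number is at
least `max {χ(G), γ_c(G)}` and at most `χ(G) + γ_c(G)`. -/
theorem connCompellingChromNum_bounds {V : Type*} [Fintype V] [Nontrivial V]
    (G : SimpleGraph V) (hconn : G.Connected) :
    max G.chromaticNumber ((connDominationNum G : ℕ) : ℕ∞) ≤
        (connCompellingChromNum G : ℕ∞) ∧
      (connCompellingChromNum G : ℕ∞) ≤
        G.chromaticNumber + ((connDominationNum G : ℕ) : ℕ∞) := by
  obtain ⟨u, v, huv⟩ : ∃ u v, G.Adj u v :=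
    ⟨_, hconn.preconnected.exists_adj_of_nontrivial (Classical.arbitrary V)⟩
  obtain ⟨S, hS, hSγ⟩ := exists_isCDS_ncard_eq_connDominationNum hconn
  obtain ⟨k, hk, hcol⟩ :=
    compellingColorable_of_isCDS hS G.colorable_chromaticNumber_of_fintype.some
  have hopt := hcol.compellingColorable_compellingChromNum
  refine ⟨max_le hopt.colorable.chromaticNumber_le
    (Nat.cast_le.2 (hopt.connDominationNum_le huv)), ?_⟩
  rw [Nat.card_fin, hSγ] at hk
  calc (connCompellingChromNum G : ℕ∞) ≤ (connDominationNum G + G.chromaticNumber.toNat : ℕ) :=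
        Nat.cast_le.2 (hcol.compellingChromNum_le.trans hk)
    _ ≤ G.chromaticNumber + connDominationNum G := by
        push_cast
        rw [add_comm]
        gcongr
        exact ENat.natCast_toNat_le_self _
end

section
/- For n ≥ 3, the Connected-compelling chromatic number of the path P_n equals n − 1. -/
open SimpleGraph

/-!
A subset of the path induces a connected subgraph exactly when it is a nonempty interval.
Colouring vertex `i` of `P_{k+1}` by `i mod k` gives every colour but `0` a single vertex, so a
rainbow committee contains all inner vertices and is an interval. Conversely, one of the last
two vertices has a colour different from the first one; a rainbow committee through both contains
the interval between them, which has at least `n - 1` vertices.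
-/

open Finset

namespace SimpleGraph

variable {α : Type*}

theorem induce_hasse_eq_hasse [Preorder α] {S : Set α} (hS : S.OrdConnected) :
    (hasse α).induce S = hasse S := by
  have hrange : (Set.range (OrderEmbedding.subtype (· ∈ S))).OrdConnected := by
    rwa [OrderEmbedding.coe_subtype, Subtype.range_coe]
  ext a b
  simp only [comap_adj, Function.Embedding.subtype_apply, hasse_adj]
  exact or_congr (hrange.apply_covBy_apply_iff (f := _)) (hrange.apply_covBy_apply_iff (f := _))

theorem preconnected_induce_hasse_iff [LinearOrder α] [LocallyFiniteOrder α] {S : Set α} :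
    ((hasse α).induce S).Preconnected ↔ S.OrdConnected := by
  classical
  refine ⟨fun h => ⟨fun x hx z hz y ⟨hxy, hyz⟩ => ?_⟩, fun hS => ?_⟩
  · by_contra hy
    obtain ⟨w⟩ := h ⟨x, hx⟩ ⟨z, hz⟩
    obtain ⟨d, -, hd₁, hd₂⟩ := w.exists_boundary_dart {v | v.1 < y}
      (lt_of_le_of_ne hxy (by rintro rfl; exact hy hx)) (not_lt.2 hyz)
    have hlt : y < d.snd.1 := lt_of_le_of_ne (not_lt.1 hd₂) fun h => hy (h ▸ d.snd.2)
    rcases hasse_adj.1 d.adj with hcov | hcov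
    · exact hcov.2 hd₁ hlt
    · exact (hcov.lt.trans (hd₁.trans hlt)).false
  · let := LinearLocallyFiniteOrder.succOrder S
    rw [induce_hasse_eq_hasse hS]
    exact hasse_preconnected_of_succ S

end SimpleGraph

theorem inducesConnected_hasse_iff {α : Type*} [LinearOrder α] [LocallyFiniteOrder α]
    {S : Set α} : InducesConnected (hasse α) S ↔ S.Nonempty ∧ S.OrdConnected := by
  rw [InducesConnected, connected_iff, preconnected_induce_hasse_iff, Set.nonempty_coe_sort,
    and_comm]

theorem Set.ordConnected_of_Ioo_bot_top_subset {α : Type*} [PartialOrder α] [BoundedOrder α]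
    {S : Set α} (h : Set.Ioo ⊥ ⊤ ⊆ S) : S.OrdConnected :=
  Set.ordConnected_of_Ioo fun _ _ _ _ _ => (Set.Ioo_subset_Ioo bot_le le_top).trans h

theorem exists_isRainbow_mem_range {V : Type*} {k : ℕ} {c : V → Fin k}
    (hc : Function.Surjective c) {u v : V} (huv : c u ≠ c v) :
    ∃ f, IsRainbow c f ∧ u ∈ Set.range f ∧ v ∈ Set.range f := by
  classical
  refine ⟨Function.update (Function.update (Function.surjInv hc) (c u) u) (c v) v,
    fun i => ?_, ⟨c u, by simp [huv]⟩, ⟨c v, by simp⟩⟩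
  rcases eq_or_ne i (c v) with rfl | hiv
  · simp
  rcases eq_or_ne i (c u) with rfl | hiu
  · simp [hiv]
  simp [hiv, hiu, Function.surjInv_eq hc]

theorem card_Icc_le_of_compels_inducesConnected {α : Type*} [LinearOrder α]
    [LocallyFiniteOrder α] {k : ℕ} {c : α → Fin k} (hc : Function.Surjective c)
    (hconn : Compels c (InducesConnected (hasse α))) {u v : α} (huv : c u ≠ c v) :
    #(Icc u v) ≤ k := by
  obtain ⟨f, hf, hu, hv⟩ := exists_isRainbow_mem_range hc huv
  have hIcc : Icc u v ⊆ univ.image f := fun y hy => by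
    simpa using (inducesConnected_hasse_iff.1 (hconn f hf)).2.out hu hv (mem_Icc.1 hy)
  calc #(Icc u v) ≤ #(univ.image f) := card_le_card hIcc
    _ ≤ #(univ : Finset (Fin k)) := card_image_le
    _ = k := card_fin k

theorem le_of_compels_inducesConnected_pathGraph {m k : ℕ} {c : Fin (m + 2) → Fin k}
    (hproper : ProperColoring (pathGraph (m + 2)) c) (hc : Function.Surjective c)
    (hconn : Compels c (InducesConnected (pathGraph (m + 2)))) : m + 1 ≤ k := by
  have hlast : c (Fin.last (m + 1)) ≠ c (Fin.last m).castSucc :=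
    hproper (pathGraph_adj.2 (Or.inr rfl))
  by_cases h : c 0 = c (Fin.last (m + 1))
  · have := card_Icc_le_of_compels_inducesConnected hc hconn (h ▸ hlast)
    simpa [Fin.card_Icc] using this
  · have := card_Icc_le_of_compels_inducesConnected hc hconn h
    simp [Fin.card_Icc] at this
    omega

def wrapColoring (k : ℕ) [NeZero k] (v : Fin (k + 1)) : Fin k :=
  Fin.ofNat k v

theorem val_wrapColoring {k : ℕ} [NeZero k] (v : Fin (k + 1)) :
    (wrapColoring k v : ℕ) = if (v : ℕ) = k then 0 else (v : ℕ) := by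
  rw [wrapColoring, Fin.val_ofNat]
  split_ifs with h
  · rw [h, Nat.mod_self]
  · exact Nat.mod_eq_of_lt (by omega)

theorem properColoring_wrapColoring {k : ℕ} [NeZero k] (hk : 2 ≤ k) :
    ProperColoring (pathGraph (k + 1)) (wrapColoring k) := by
  intro u v huv hc
  rw [pathGraph_adj] at huv
  have := congrArg Fin.val hc
  rw [val_wrapColoring, val_wrapColoring] at this
  split_ifs at this <;> omega

theorem wrapColoring_eq_iff_of_mem_Ioo {k : ℕ} [NeZero k] {v w : Fin (k + 1)}
    (hv : v ∈ Set.Ioo ⊥ ⊤) : wrapColoring k w = wrapColoring k v ↔ w = v := by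
  refine ⟨fun h => ?_, congrArg _⟩
  obtain ⟨hv₀, hv₁⟩ := hv
  rw [bot_eq_zero, Fin.lt_def, Fin.val_zero] at hv₀
  rw [Fin.top_eq_last, Fin.lt_def, Fin.val_last] at hv₁
  have := congrArg Fin.val h
  rw [val_wrapColoring, val_wrapColoring] at this
  split_ifs at this <;> omega

theorem compels_wrapColoring {k : ℕ} [NeZero k] :
    Compels (wrapColoring k) (InducesConnected (pathGraph (k + 1))) := by
  intro f hf
  refine inducesConnected_hasse_iff.2 ⟨Set.range_nonempty f, ?_⟩
  exact Set.ordConnected_of_Ioo_bot_top_subset fun v hv =>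
    ⟨wrapColoring k v, (wrapColoring_eq_iff_of_mem_Ioo hv).1 (hf _)⟩

/-- For `n ≥ 3`, the Connected-compelling chromatic number of the path `P_n` is `n - 1`. -/
theorem connCompellingChromNum_pathGraph (n : ℕ) (hn : 3 ≤ n) :
    connCompellingChromNum (pathGraph n) = n - 1 := by
  obtain ⟨m, rfl⟩ : ∃ m, n = m + 2 := ⟨n - 2, by omega⟩
  show connCompellingChromNum (pathGraph (m + 2)) = m + 1
  refine IsLeast.csInf_eq ⟨⟨wrapColoring (m + 1), ?_, ?_, compels_wrapColoring⟩, ?_⟩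
  · exact properColoring_wrapColoring (by omega)
  · exact fun i => ⟨i.castSucc, Fin.ext (by simp [val_wrapColoring, i.isLt.ne])⟩
  · rintro k ⟨c, hproper, hc, hconn⟩
    exact le_of_compels_inducesConnected_pathGraph hproper hc hconn
end

section
/- For any tree T of order at least 3, the Connected-compelling chromatic number of T equals 1 plus the number of interior (non-leaf) vertices of T. -/
open SimpleGraph

/-!
Give every interior vertex its own color and all leaves one further color. This is proper once
there are at least three vertices, and it is compelling: a rainbow committee contains every
interior vertex, the only vertex of its color, and deleting leaves does not disconnect a tree.

Conversely, an interior vertex `v` of a tree has a neighbour `y` that it separates from any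
given vertex `w ≠ v`. If `w` had the color of `v`, a rainbow committee through `y` and `w` would
miss `v` and so be disconnected. Hence in a compelling coloring the interior vertices and one
leaf all receive distinct colors.
-/

open Function

section Rainbow

variable {V : Type*} {k : ℕ} {c : V → Fin k}

lemma IsRainbow.apply_color_eq {f : Fin k → V} (hf : IsRainbow c f) {x : V}
    (hx : x ∈ Set.range f) : f (c x) = x := by
  obtain ⟨i, rfl⟩ := hx
  rw [hf i]

lemma exists_isRainbow_mem_range_of_color_ne (hc : Surjective c) {u w : V} (h : c u ≠ c w) :
    ∃ f, IsRainbow c f ∧ u ∈ Set.range f ∧ w ∈ Set.range f := by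
  let f := update (update (surjInv hc) (c u) u) (c w) w
  refine ⟨f, fun i => ?_, ⟨c u, by simp [f, h]⟩, ⟨c w, by simp [f]⟩⟩
  rcases eq_or_ne i (c w) with rfl | hiw
  · simp [f]
  rcases eq_or_ne i (c u) with rfl | hiu
  · simp [f, hiw]
  simp [f, hiw, hiu, surjInv_eq hc]

lemma Compels.color_ne_of_forall_mem_support {G : SimpleGraph V}
    (hP : Compels c (InducesConnected G)) (hc : Surjective c) {v w y : V} (hwv : w ≠ v)
    (hyv : c y ≠ c v) (hsep : ∀ q : G.Walk y w, v ∈ q.support) : c w ≠ c v := by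
  intro hcw
  obtain ⟨f, hf, hy, hw⟩ := exists_isRainbow_mem_range_of_color_ne hc (hcw ▸ hyv)
  obtain ⟨q⟩ := (hP f hf).preconnected ⟨y, hy⟩ ⟨w, hw⟩
  have hv : v ∈ Set.range f := by
    have hmem : v ∈ (q.map (Embedding.induce (Set.range f)).toHom).support := hsep _
    rw [Walk.support_map] at hmem
    obtain ⟨x, -, rfl⟩ := List.mem_map.mp hmem
    exact x.2
  exact hwv (by rw [← hf.apply_color_eq hw, hcw, hf.apply_color_eq hv])

lemma exists_compelling_fin_of_fintype {α : Type*} [Fintype α] {G : SimpleGraph V}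
    {P : Set V → Prop} (c : V → α) (hproper : ∀ ⦃u v⦄, G.Adj u v → c u ≠ c v)
    (hc : Surjective c) (hP : ∀ g : α → V, (∀ a, c (g a) = a) → P (Set.range g)) :
    ∃ c' : V → Fin (Fintype.card α),
      ProperColoring G c' ∧ Surjective c' ∧ Compels c' P := by
  let e := Fintype.equivFin α
  refine ⟨e ∘ c, fun _ _ h => e.injective.ne (hproper h), e.surjective.comp hc,
    fun f hf => ?_⟩
  rw [← EquivLike.range_comp f e]
  exact hP (f ∘ e) fun a => e.injective (by simpa using hf (e a))

end Rainbow

namespace SimpleGraph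

variable {V : Type*} {G : SimpleGraph V}

lemma neighborSet_subsingleton_iff_degree_le_one {v : V} [Fintype (G.neighborSet v)] :
    (G.neighborSet v).Subsingleton ↔ G.degree v ≤ 1 := by
  rw [← card_neighborSet_eq_degree, Fintype.card_le_one_iff_subsingleton, Set.subsingleton_coe]

lemma Preconnected.eq_or_eq_of_adj_of_subsingleton (hG : G.Preconnected) {u v : V}
    (huv : G.Adj u v) (hu : (G.neighborSet u).Subsingleton)
    (hv : (G.neighborSet v).Subsingleton) (w : V) : w = u ∨ w = v := by
  by_contra! hw
  obtain ⟨p, hp⟩ := hG.exists_isPath u w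
  have hnil : ¬p.Nil := Walk.not_nil_of_ne hw.1.symm
  have hsnd : p.snd = v := hu (p.adj_snd hnil) huv
  exact hp.isTrail.not_mem_support_of_subsingleton_neighborSet huv.ne' hw.2.symm hv
    (hsnd ▸ p.getVert_mem_support 1)

/-- Otherwise every neighbour of `v` lies on the path from `w` to `v`, hence is its penultimate
vertex. -/
lemma IsAcyclic.exists_adj_forall_mem_support (hG : G.IsAcyclic) {v : V}
    (hv : (G.neighborSet v).Nontrivial) (w : V) :
    ∃ y, G.Adj v y ∧ ∀ q : G.Walk y w, v ∈ q.support := by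
  classical
  by_contra! h
  obtain ⟨y₀, hy₀⟩ := hv.nonempty
  obtain ⟨q₀, -⟩ := h y₀ hy₀
  obtain ⟨p, hp⟩ := (q₀.reverse.concat hy₀.symm).reachable.exists_isPath
  have hpenultimate : ∀ y, G.Adj v y → y = p.penultimate := fun y hy => by
    obtain ⟨q, hq⟩ := h y hy
    have hvq : v ∉ q.reverse.toPath.val.support := fun hv' =>
      hq (by simpa using q.reverse.support_toPath_subset_support hv')
    exact hG.eq_penultimate_of_adj_end hp hy
      (hG.mem_support_of_ne_mem_support_of_adj_of_isPath hp q.reverse.toPath.2 hy hvq)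
  exact hv.not_subsingleton fun y hy y' hy' =>
    (hpenultimate y hy).trans (hpenultimate y' hy').symm

section Finite

variable [Fintype V] [DecidableRel G.Adj]

lemma Preconnected.not_adj_of_degree_eq_one (hG : G.Preconnected) (hcard : 2 < Fintype.card V)
    {u v : V} (hu : G.degree u = 1) (hv : G.degree v = 1) : ¬G.Adj u v := by
  intro huv
  have huv' := hG.eq_or_eq_of_adj_of_subsingleton huv
    (neighborSet_subsingleton_iff_degree_le_one.mpr hu.le)
    (neighborSet_subsingleton_iff_degree_le_one.mpr hv.le)
  obtain ⟨a, b, c, hab, hac, hbc⟩ := Fintype.two_lt_card_iff.mp hcard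
  have := huv' a; have := huv' b; have := huv' c
  grind

lemma Preconnected.neighborSet_nontrivial_of_degree_ne_one [Nontrivial V] (hG : G.Preconnected)
    {v : V} (hv : G.degree v ≠ 1) : (G.neighborSet v).Nontrivial := by
  rw [← Set.not_subsingleton_iff, neighborSet_subsingleton_iff_degree_le_one]
  have := hG.degree_pos_of_nontrivial v
  omega

variable (G) in
def leafMergingColoring (v : V) : Option {v // G.degree v ≠ 1} :=
  if h : G.degree v = 1 then none else some ⟨v, h⟩

lemma leafMergingColoring_of_degree_eq_one {v : V} (hv : G.degree v = 1) :
    G.leafMergingColoring v = none := dif_pos hv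

lemma leafMergingColoring_of_degree_ne_one {v : V} (hv : G.degree v ≠ 1) :
    G.leafMergingColoring v = some ⟨v, hv⟩ := dif_neg hv

lemma eq_of_leafMergingColoring_eq_some {u v : V} {hv : G.degree v ≠ 1}
    (h : G.leafMergingColoring u = some ⟨v, hv⟩) : u = v := by
  unfold leafMergingColoring at h
  split_ifs at h with hu
  exact congrArg Subtype.val (Option.some_injective _ h)

lemma Preconnected.leafMergingColoring_ne_of_adj (hG : G.Preconnected)
    (hcard : 2 < Fintype.card V) {u v : V} (huv : G.Adj u v) :
    G.leafMergingColoring u ≠ G.leafMergingColoring v := by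
  intro h
  by_cases hu : G.degree u = 1
  · have hv : G.degree v = 1 := by
      by_contra hv
      rw [leafMergingColoring_of_degree_eq_one hu, leafMergingColoring_of_degree_ne_one hv] at h
      exact Option.some_ne_none _ h.symm
    exact hG.not_adj_of_degree_eq_one hcard hu hv huv
  · rw [leafMergingColoring_of_degree_ne_one hu] at h
    exact huv.ne (eq_of_leafMergingColoring_eq_some h.symm).symm

lemma leafMergingColoring_surjective {ℓ : V} (hℓ : G.degree ℓ = 1) :
    Surjective G.leafMergingColoring := by
  rintro (_ | ⟨v, hv⟩)
  · exact ⟨ℓ, leafMergingColoring_of_degree_eq_one hℓ⟩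
  · exact ⟨v, leafMergingColoring_of_degree_ne_one hv⟩

lemma Connected.induce_range_connected_of_leafMergingColoring (hG : G.Connected)
    (g : Option {v // G.degree v ≠ 1} → V) (hg : ∀ a, G.leafMergingColoring (g a) = a) :
    (G.induce (Set.range g)).Connected := by
  refine (connected_iff _).mpr ⟨hG.preconnected.induce_of_degree_eq_one fun v hv => ?_,
    ⟨⟨g none, none, rfl⟩⟩⟩
  rw [neighborSet_subsingleton_iff_degree_le_one]
  by_contra hdeg
  have hv' : G.degree v ≠ 1 := by omega
  exact hv ⟨some ⟨v, hv'⟩, eq_of_leafMergingColoring_eq_some (hg _)⟩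

lemma Connected.exists_compelling_coloring (hG : G.Connected) (hcard : 2 < Fintype.card V)
    {ℓ : V} (hℓ : G.degree ℓ = 1) :
    ∃ c : V → Fin (Fintype.card {v // G.degree v ≠ 1} + 1),
      ProperColoring G c ∧ Surjective c ∧ Compels c (InducesConnected G) := by
  rw [← Fintype.card_option]
  exact exists_compelling_fin_of_fintype G.leafMergingColoring
    (fun _ _ => hG.preconnected.leafMergingColoring_ne_of_adj hcard)
    (leafMergingColoring_surjective hℓ) hG.induce_range_connected_of_leafMergingColoring

lemma IsTree.color_ne_of_degree_ne_one [Nontrivial V] (hT : G.IsTree) {k : ℕ} {c : V → Fin k}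
    (hproper : ProperColoring G c) (hc : Surjective c) (hP : Compels c (InducesConnected G))
    {v w : V} (hv : G.degree v ≠ 1) (hwv : w ≠ v) : c w ≠ c v := by
  obtain ⟨y, hy, hsep⟩ := hT.isAcyclic.exists_adj_forall_mem_support
    (hT.connected.preconnected.neighborSet_nontrivial_of_degree_ne_one hv) w
  exact hP.color_ne_of_forall_mem_support hc hwv (hproper hy).symm hsep

lemma IsTree.card_interior_add_one_le [Nontrivial V] (hT : G.IsTree) {k : ℕ} {c : V → Fin k}
    (hproper : ProperColoring G c) (hc : Surjective c) (hP : Compels c (InducesConnected G)) :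
    Fintype.card {v // G.degree v ≠ 1} + 1 ≤ k := by
  obtain ⟨ℓ, hℓ⟩ := hT.exists_vert_degree_one_of_nontrivial
  have hne : ∀ {v w : V}, G.degree v ≠ 1 → w ≠ v → c w ≠ c v :=
    hT.color_ne_of_degree_ne_one hproper hc hP
  have hinj :
      Injective fun a : Option {v // G.degree v ≠ 1} => a.elim (c ℓ) (c ∘ Subtype.val) := by
    rintro (_ | ⟨v, hv⟩) (_ | ⟨w, hw⟩) h
    · rfl
    · exact absurd h (hne hw (by rintro rfl; exact hw hℓ))
    · exact absurd h.symm (hne hv (by rintro rfl; exact hv hℓ))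
    · by_contra hvw
      exact hne hw (fun h' => hvw (by subst h'; rfl)) h
  simpa using Fintype.card_le_of_injective _ hinj

end Finite

end SimpleGraph

/-- For a tree of order at least 3, the Connected-compelling chromatic number equals one
plus the number of interior (non-leaf) vertices. -/
theorem connCompellingChromNum_tree {V : Type*} [Fintype V] (T : SimpleGraph V)
    [DecidableRel T.Adj] (hT : T.IsTree) (hcard : 3 ≤ Fintype.card V) :
    connCompellingChromNum T = 1 + {v : V | T.degree v ≠ 1}.ncard := by
  have : Nontrivial V := Fintype.one_lt_card_iff_nontrivial.mp (by omega)
  obtain ⟨ℓ, hℓ⟩ := hT.exists_vert_degree_one_of_nontrivial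
  rw [Set.ncard_eq_toFinset_card', Set.toFinset_card, add_comm]
  refine IsLeast.csInf_eq ⟨hT.connected.exists_compelling_coloring hcard hℓ, ?_⟩
  rintro k ⟨c, hproper, hc, hP⟩
  exact hT.card_interior_add_one_le hproper hc hP
end

section
/- If D is a connected dominating set of an outerplanar graph G, then the graph G − D (the induced subgraph on V(G) \ D) contains no cycle, i.e., is a forest. -/
open SimpleGraph

/-- `H` is a minor of `G`, witnessed by pairwise-disjoint nonempty connected branch sets,
one for each vertex of `H`, with adjacent vertices of `H` having branch sets joined by an
edge of `G`. -/
def HasMinor {α V : Type*} (G : SimpleGraph V) (H : SimpleGraph α) : Prop :=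
  ∃ S : α → Set V,
    (∀ a, (S a).Nonempty) ∧
    (∀ a, (G.induce (S a)).Connected) ∧
    (Pairwise fun a b => Disjoint (S a) (S b)) ∧
    ∀ a b, H.Adj a b → ∃ u ∈ S a, ∃ v ∈ S b, G.Adj u v

/-- A graph is outerplanar iff it has no `K₄` minor and no `K_{2,3}` minor. -/
def Outerplanar {V : Type*} (G : SimpleGraph V) : Prop :=
  ¬HasMinor G (completeGraph (Fin 4)) ∧
    ¬HasMinor G (completeBipartiteGraph (Fin 2) (Fin 3))

/-!
A cycle of `G - D` splits into three arcs, which are connected and pairwise adjacent: a `K₃` minor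
living on the cycle. The set `D` is connected, disjoint from the cycle, and adjacent to each arc
because it dominates, so adding it as a fourth branch set gives a `K₄` minor, which an outerplanar
graph does not have.
-/

def IsMinorModel {α V : Type*} (G : SimpleGraph V) (H : SimpleGraph α) (S : α → Set V) :
    Prop :=
  (∀ a, (S a).Nonempty) ∧
    (∀ a, (G.induce (S a)).Connected) ∧
    (Pairwise fun a b => Disjoint (S a) (S b)) ∧
    ∀ a b, H.Adj a b → ∃ u ∈ S a, ∃ v ∈ S b, G.Adj u v

namespace IsMinorModel

variable {V : Type*} {G : SimpleGraph V}

theorem hasMinor {α : Type*} {H : SimpleGraph α} {S : α → Set V} (hS : IsMinorModel G H S) :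
    HasMinor G H :=
  ⟨S, hS⟩

theorem of_isEmpty {α : Type*} [IsEmpty α] (H : SimpleGraph α) (S : α → Set V) :
    IsMinorModel G H S :=
  ⟨isEmptyElim, isEmptyElim, isEmptyElim, isEmptyElim⟩

theorem vecCons {n : ℕ} {S : Fin n → Set V} (hS : IsMinorModel G (completeGraph (Fin n)) S)
    {T : Set V} (hT : (G.induce T).Connected) (hdisj : ∀ i, Disjoint T (S i))
    (hadj : ∀ i, ∃ x ∈ T, ∃ y ∈ S i, G.Adj x y) :
    IsMinorModel G (completeGraph (Fin (n + 1))) (Matrix.vecCons T S) := by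
  obtain ⟨hne, hconn, hdisjS, hadjS⟩ := hS
  refine ⟨Fin.cases (Set.nonempty_coe_sort.mp hT.nonempty) hne, Fin.cases hT hconn, ?_, ?_⟩
  · intro i j hij
    cases i using Fin.cases <;> cases j using Fin.cases
    · exact absurd rfl hij
    · exact hdisj _
    · exact (hdisj _).symm
    · exact hdisjS (Fin.succ_injective _ |>.ne_iff.mp hij)
  · intro i j hij
    cases i using Fin.cases <;> cases j using Fin.cases
    · exact absurd rfl hij
    · exact hadj _
    · obtain ⟨x, hx, y, hy, hxy⟩ := hadj _
      exact ⟨y, hy, x, hx, hxy.symm⟩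
    · exact hadjS _ _ (Fin.succ_injective _ |>.ne_iff.mp hij)

end IsMinorModel

namespace SimpleGraph

variable {V : Type*} {G : SimpleGraph V}

theorem isMinorModel_completeGraph_three {a b u v : V} {r : G.Walk a b}
    (hu : u ∉ r.support) (hv : v ∉ r.support) (huv : G.Adj u v) (hua : G.Adj u a)
    (hbv : G.Adj b v) :
    IsMinorModel G (completeGraph (Fin 3)) ![{v}, {u}, {x | x ∈ r.support}] := by
  have hr := (IsMinorModel.of_isEmpty (G := G) (completeGraph (Fin 0)) ![]).vecCons
    r.connected_induce_support (fun i => i.elim0) (fun i => i.elim0)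
  have hur := hr.vecCons (T := {u}) .of_subsingleton (by simpa [Fin.forall_fin_one])
    (by simpa [Fin.forall_fin_one] using ⟨a, r.start_mem_support, hua⟩)
  refine hur.vecCons (T := {v}) .of_subsingleton ?_ ?_
  · simpa [Fin.forall_fin_two] using ⟨huv.ne.symm, hv⟩
  · simpa [Fin.forall_fin_two] using ⟨huv.symm, b, r.end_mem_support, hbv.symm⟩

theorem Walk.IsCycle.exists_isMinorModel_completeGraph_three {v : V} {c : G.Walk v v}
    (hc : c.IsCycle) :
    ∃ S : Fin 3 → Set V, IsMinorModel G (completeGraph (Fin 3)) S ∧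
      ∀ i, S i ⊆ {x | x ∈ c.support} := by
  have hlen := hc.three_le_length
  rcases c with _ | ⟨h, _ | ⟨h₂, _ | ⟨h₃, q⟩⟩⟩
  iterate 3 simp at hlen
  obtain ⟨w, r, h₄, hq⟩ := Walk.exists_cons_eq_concat h₃ q
  rw [hq] at hc ⊢
  obtain ⟨hp, -⟩ := (Walk.cons_isCycle_iff _ h).mp hc
  obtain ⟨hrv, hu⟩ := (Walk.cons_isPath_iff _ _).mp hp
  obtain ⟨-, hv⟩ := (Walk.concat_isPath_iff h₄).mp hrv
  refine ⟨_, isMinorModel_completeGraph_three (fun hmem => hu ?_) hv h.symm h₂ h₄, ?_⟩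
  · simp [Walk.support_concat, hmem]
  · intro i
    fin_cases i <;> intro x hx <;> simp_all [Walk.support_concat]

end SimpleGraph

theorem IsCDS.isMinorModel_vecCons {V : Type*} {G : SimpleGraph V} {D : Set V} (hD : IsCDS G D)
    {n : ℕ} {S : Fin n → Set V} (hS : IsMinorModel G (completeGraph (Fin n)) S)
    (hSD : ∀ i, Disjoint D (S i)) :
    IsMinorModel G (completeGraph (Fin (n + 1))) (Matrix.vecCons D S) := by
  refine hS.vecCons hD.1 hSD fun i => ?_
  obtain ⟨x, hx⟩ := hS.1 i
  obtain ⟨d, hd, hdx⟩ := hD.2 x (Set.disjoint_right.mp (hSD i) hx)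
  exact ⟨d, hd, x, hx, hdx⟩

theorem isAcyclic_of_removing_cds_general {V : Type*} (G : SimpleGraph V)
    (hG : Outerplanar G) (D : Set V) (hD : IsCDS G D) :
    (G.induce Dᶜ).IsAcyclic := by
  intro v c hc
  have hcG := hc.map (f := (Embedding.induce Dᶜ).toHom) Subtype.val_injective
  obtain ⟨S, hS, hSc⟩ := hcG.exists_isMinorModel_completeGraph_three
  have hSD : ∀ i, Disjoint D (S i) := fun i => Set.disjoint_right.mpr fun x hx => by
    obtain ⟨y, -, rfl⟩ := List.mem_map.mp (Walk.support_map _ _ ▸ hSc i hx)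
    exact y.2
  exact hG.1 (hD.isMinorModel_vecCons hS hSD).hasMinor

/-- Removing a connected dominating set from an outerplanar graph leaves a forest. -/
theorem isAcyclic_of_removing_cds {V : Type*} [Fintype V] (G : SimpleGraph V)
    (hG : Outerplanar G) (D : Set V) (hD : IsCDS G D) :
    (G.induce Dᶜ).IsAcyclic :=
  isAcyclic_of_removing_cds_general G hG D hD
end
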